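/- arXiv:2306.08321 — 2 statements merged into one kernel-verified Lean document; each statement's English description precedes it below -/
import Mathlib

section
/- For every integer N ≥ 1 and every function f ∈ NN(N), one has κ(f) ≤ inf{ κ(θ) : θ ∈ ℝ^{(d+2)N} and f_θ(x) = f(x) for all x ∈ B^d } ≤ 3 κ(f). -/
open MeasureTheory Real

noncomputable section

/-- Euclidean space ℝ^d. -/
abbrev E (d : ℕ) := EuclideanSpace ℝ (Fin d)

/-- The ReLU function σ(t) = max{t, 0}. -/
def relu (t : ℝ) : ℝ := max t 0

/-- The quantity (xᵀ,1)v : the inner product of (x,1) ∈ ℝ^{d+1} with v ∈ ℝ^{d+1}. -/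
def aff {d : ℕ} (x : E d) (v : E (d + 1)) : ℝ :=
  (∑ i : Fin d, x i * v i.castSucc) + v (Fin.last d)

/-- Parameters θ = (a_1, w_1, …, a_N, w_N) of a shallow ReLU network of width N. -/
abbrev Params (d N : ℕ) := (Fin N → ℝ) × (Fin N → E (d + 1))

/-- The network function f_θ(x) = Σ_i a_i σ((xᵀ,1) w_i). -/
def networkFn {d N : ℕ} (θ : Params d N) (x : E d) : ℝ :=
  ∑ i, θ.1 i * relu (aff x (θ.2 i))

/-- The path norm κ(θ) = Σ_i |a_i| ‖w_i‖₂. -/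
def pathNorm {d N : ℕ} (θ : Params d N) : ℝ :=
  ∑ i, |θ.1 i| * ‖θ.2 i‖

/-- The squared Euclidean norm ‖θ‖₂² of the parameter vector. -/
def paramNormSq {d N : ℕ} (θ : Params d N) : ℝ :=
  (∑ i, (θ.1 i) ^ 2) + ∑ i, ‖θ.2 i‖ ^ 2

/-- NN(N): functions on the unit ball B^d realized by a width-N shallow ReLU network. -/
def NNclass (d N : ℕ) : Set (E d → ℝ) :=
  {f | ∃ θ : Params d N, ∀ x : E d, ‖x‖ ≤ 1 → f x = networkFn θ x}

/-- NN(N, M): functions realized by a width-N network with path norm κ(θ) ≤ M. -/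
def NNclassM (d N : ℕ) (M : ℝ) : Set (E d → ℝ) :=
  {f | ∃ θ : Params d N, pathNorm θ ≤ M ∧ ∀ x : E d, ‖x‖ ≤ 1 → f x = networkFn θ x}

/-- κ(f) = inf{ Σ_j |c_j| : f(x) = Σ_j c_j σ((xᵀ,1)v_j) on B^d, v_j ∈ S^d }. -/
def kappaF {d : ℕ} (f : E d → ℝ) : ℝ :=
  sInf {s | ∃ (m : ℕ) (c : Fin m → ℝ) (v : Fin m → E (d + 1)),
    (∀ j, ‖v j‖ = 1) ∧ (∀ x : E d, ‖x‖ ≤ 1 → f x = ∑ j, c j * relu (aff x (v j))) ∧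
    s = ∑ j, |c j|}

/-- S_- = {v ∈ S^d : v_{d+1} ≤ -√2/2}. -/
def Sminus (d : ℕ) : Set (E (d + 1)) :=
  {v | ‖v‖ = 1 ∧ v (Fin.last d) ≤ -(Real.sqrt 2 / 2)}

/-- S_+ = -S_-. -/
def Splus (d : ℕ) : Set (E (d + 1)) := {v | -v ∈ Sminus d}

/-- S_0 = S^d \ (S_- ∪ S_+). -/
def Szero (d : ℕ) : Set (E (d + 1)) := {v | ‖v‖ = 1} \ (Sminus d ∪ Splus d)

/-- The variation class F_σ(M): functions f(x) = ∫_{S^d} σ((xᵀ,1)v) dμ(v) for a signed Radon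
measure μ on S^d with ‖μ‖ ≤ M (represented by its Jordan decomposition μ = μp - μn). -/
def Fsigma (d : ℕ) (M : ℝ) : Set (E d → ℝ) :=
  {f | ∃ μp μn : Measure (E (d + 1)), IsFiniteMeasure μp ∧ IsFiniteMeasure μn ∧
    μp {v | ‖v‖ = 1}ᶜ = 0 ∧ μn {v | ‖v‖ = 1}ᶜ = 0 ∧
    (μp Set.univ).toReal + (μn Set.univ).toReal ≤ M ∧
    ∀ x : E d, ‖x‖ ≤ 1 →
      f x = (∫ v, relu (aff x v) ∂μp) - ∫ v, relu (aff x v) ∂μn}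

/-- Empirical L²(μ_n) norm: ‖f‖_{L²(μ_n)} = ((1/n) Σ_i f(X_i)²)^{1/2}. -/
def empNorm {d n : ℕ} (X : Fin n → E d) (f : E d → ℝ) : ℝ :=
  Real.sqrt ((∑ i, (f (X i)) ^ 2) / n)

/-- Local complexity G_n(F; δ, ξ) = E[ sup { |(1/n) Σ_i ξ_i f(X_i)| : f ∈ F, ‖f‖_{L²(μ_n)} ≤ δ} ]. -/
def localComplexity {d n : ℕ} {Ω : Type*} [MeasurableSpace Ω] (P : Measure Ω)
    (F : Set (E d → ℝ)) (X : Fin n → E d) (δ : ℝ) (ξ : Fin n → Ω → ℝ) : ℝ :=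
  ∫ ω, sSup {r | ∃ f ∈ F, empNorm X f ≤ δ ∧ r = |(∑ i, ξ i ω * f (X i)) / n|} ∂P

/-- star(F) = {a f : f ∈ F, a ∈ [0,1]}. -/
def starHull {d : ℕ} (F : Set (E d → ℝ)) : Set (E d → ℝ) :=
  {g | ∃ f ∈ F, ∃ a : ℝ, 0 ≤ a ∧ a ≤ 1 ∧ g = fun x => a * f x}

/-- ∂F = {f₁ - f₂ : f₁, f₂ ∈ F}. -/
def diffClass {d : ℕ} (F : Set (E d → ℝ)) : Set (E d → ℝ) :=
  {g | ∃ f₁ ∈ F, ∃ f₂ ∈ F, g = f₁ - f₂}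

/-- Truncation operator T_b. -/
def truncate {d : ℕ} (b : ℝ) (f : E d → ℝ) : E d → ℝ := fun x => max (-b) (min b (f x))

/-- The Hölder ball H^α on B^d. -/
def HolderBall (d : ℕ) (α : ℝ) : Set (E d → ℝ) :=
  {h | ∃ (r : ℕ) (β : ℝ) (g : E d → ℝ), α = r + β ∧ 0 < β ∧ β ≤ 1 ∧
    (∀ x : E d, ‖x‖ ≤ 1 → g x = h x) ∧ ContDiff ℝ r g ∧
    (∀ k : ℕ, k ≤ r → ∀ x, ‖iteratedFDeriv ℝ k g x‖ ≤ 1) ∧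
    (∀ x y : E d, ‖iteratedFDeriv ℝ r g x - iteratedFDeriv ℝ r g y‖ ≤ ‖x - y‖ ^ β)}

/-!
Normalizing each neuron, `a σ((x,1)·w) = (a‖w‖) σ((x,1)·w/‖w‖)` on the ball, gives `κ(f) ≤ κ(θ)`.

For the converse, any representation with unit directions has a canonical form on the ball: one
ReLU for each direction, taken up to sign, whose kink hyperplane meets the open ball, plus an
affine function `(x,1)·W` (using `σ(t) = σ(-t) + t` and `σ = id` or `0` on non-kinked neurons).
The canonical form is unique, since a second difference across one kink isolates its
coefficient. Hence a representation of mass `s` bounds the canonical coefficients `λ` by `s` in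
`ℓ¹` and each `W + Σ_{z ∈ F} λ_z z` by `s` in norm. With at most `N - 2` kinks, the canonical
form plus `σ(W) - σ(-W)` is a width-`N` network of cost `≤ 3s`. Otherwise the given width-`N`
network has at most one pair of parallel kinked neurons, and its cost (after merging an equal
pair) is bounded by these estimates.
-/

open RealInnerProductSpace Filter Topology

section Relu

lemma relu_of_nonneg {t : ℝ} (h : 0 ≤ t) : relu t = t := max_eq_left h

lemma relu_of_nonpos {t : ℝ} (h : t ≤ 0) : relu t = 0 := max_eq_right h

lemma relu_sub_relu_neg (t : ℝ) : relu t - relu (-t) = t := by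
  rcases le_total t 0 with h | h
  · rw [relu_of_nonpos h, relu_of_nonneg (neg_nonneg.2 h)]; ring
  · rw [relu_of_nonneg h, relu_of_nonpos (neg_nonpos.2 h)]; ring

lemma relu_mul_of_nonneg {c : ℝ} (hc : 0 ≤ c) (t : ℝ) : relu (c * t) = c * relu t := by
  rcases le_total t 0 with h | h
  · rw [relu_of_nonpos h, relu_of_nonpos (mul_nonpos_of_nonneg_of_nonpos hc h), mul_zero]
  · rw [relu_of_nonneg h, relu_of_nonneg (mul_nonneg hc h)]

lemma relu_add_add_relu_sub {a t : ℝ} (h : |t| < |a|) :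
    relu (a + t) + relu (a - t) = 2 * relu a := by
  rcases abs_lt.1 h with ⟨h₁, h₂⟩
  rcases le_total a 0 with ha | ha
  · rw [abs_of_nonpos ha] at h₁ h₂
    rw [relu_of_nonpos (by linarith), relu_of_nonpos (by linarith), relu_of_nonpos ha]; ring
  · rw [abs_of_nonneg ha] at h₁ h₂
    rw [relu_of_nonneg (by linarith), relu_of_nonneg (by linarith), relu_of_nonneg ha]; ring

end Relu

section Aff

variable {d : ℕ}

def linPart (v : E (d + 1)) : E d := WithLp.toLp 2 fun i => v i.castSucc

@[simp] lemma linPart_apply (v : E (d + 1)) (i : Fin d) : linPart v i = v i.castSucc := rfl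

lemma aff_eq_inner (x : E d) (v : E (d + 1)) : aff x v = ⟪x, linPart v⟫ + v (Fin.last d) := by
  simp [aff, PiLp.inner_apply, mul_comm]

lemma aff_add (x : E d) (v w : E (d + 1)) : aff x (v + w) = aff x v + aff x w := by
  simp only [aff, PiLp.add_apply, mul_add, Finset.sum_add_distrib]; ring

lemma aff_smul (x : E d) (r : ℝ) (v : E (d + 1)) : aff x (r • v) = r * aff x v := by
  simp only [aff, PiLp.smul_apply, smul_eq_mul, Finset.mul_sum, mul_add]
  congr 1
  exact Finset.sum_congr rfl fun i _ => by ring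

def affₗ (x : E d) : E (d + 1) →ₗ[ℝ] ℝ where
  toFun := aff x
  map_add' := aff_add x
  map_smul' := aff_smul x

lemma aff_neg (x : E d) (v : E (d + 1)) : aff x (-v) = -aff x v := (affₗ x).map_neg v

lemma aff_zero (x : E d) : aff x (0 : E (d + 1)) = 0 := (affₗ x).map_zero

lemma aff_sum {ι : Type*} (s : Finset ι) (g : ι → E (d + 1)) (x : E d) :
    aff x (∑ i ∈ s, g i) = ∑ i ∈ s, aff x (g i) := map_sum (affₗ x) g s

lemma linPart_neg (v : E (d + 1)) : linPart (-v) = -linPart v := by ext i; simp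

lemma linPart_smul (r : ℝ) (v : E (d + 1)) : linPart (r • v) = r • linPart v := by ext i; simp

lemma eq_of_linPart_eq {v w : E (d + 1)} (h : linPart v = linPart w)
    (hl : v (Fin.last d) = w (Fin.last d)) : v = w := by
  ext k
  rcases Fin.eq_castSucc_or_eq_last k with ⟨i, rfl⟩ | rfl
  · simpa using congrArg (· i) h
  · exact hl

lemma norm_linPart_le (v : E (d + 1)) : ‖linPart v‖ ≤ ‖v‖ := by
  have h : ‖v‖ ^ 2 = ‖linPart v‖ ^ 2 + v (Fin.last d) ^ 2 := by
    rw [EuclideanSpace.norm_eq, EuclideanSpace.norm_eq, Real.sq_sqrt (by positivity),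
      Real.sq_sqrt (by positivity), Fin.sum_univ_castSucc]
    simp
  nlinarith [norm_nonneg (linPart v), norm_nonneg v, sq_nonneg (v (Fin.last d))]

lemma eq_zero_of_forall_aff_eq_zero {w : E (d + 1)} (h : ∀ x : E d, ‖x‖ ≤ 1 → aff x w = 0) :
    w = 0 := by
  have hlast : w (Fin.last d) = 0 := by simpa [aff] using h 0 (by simp)
  refine eq_of_linPart_eq ?_ (by simpa using hlast)
  ext i
  have hi := h (EuclideanSpace.single i 1) (by simp)
  simpa [aff, hlast, PiLp.single_apply] using hi

end Aff

section Kinks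

variable {d : ℕ}

/-- The hyperplane `{x | aff x v = 0}` meets the open unit ball. -/
def Kinked (v : E (d + 1)) : Prop := |v (Fin.last d)| < ‖linPart v‖

def AffNonneg (v : E (d + 1)) : Prop := ‖linPart v‖ ≤ v (Fin.last d)

def AffNonpos (v : E (d + 1)) : Prop := v (Fin.last d) ≤ -‖linPart v‖

lemma kinked_or_affNonneg_or_affNonpos (v : E (d + 1)) :
    Kinked v ∨ AffNonneg v ∨ AffNonpos v := by
  unfold Kinked AffNonneg AffNonpos
  rcases lt_or_ge |v (Fin.last d)| ‖linPart v‖ with h | h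
  · exact Or.inl h
  · rcases le_total 0 (v (Fin.last d)) with h0 | h0
    · exact Or.inr (Or.inl (by rwa [abs_of_nonneg h0] at h))
    · exact Or.inr (Or.inr (by rw [abs_of_nonpos h0] at h; linarith))

lemma AffNonneg.aff_nonneg {v : E (d + 1)} (h : AffNonneg v) {x : E d} (hx : ‖x‖ ≤ 1) :
    0 ≤ aff x v := by
  have h₁ := abs_le.1 ((abs_real_inner_le_norm x (linPart v)).trans
    (mul_le_of_le_one_left (norm_nonneg _) hx))
  unfold AffNonneg at h
  rw [aff_eq_inner]
  linarith

lemma AffNonpos.aff_nonpos {v : E (d + 1)} (h : AffNonpos v) {x : E d} (hx : ‖x‖ ≤ 1) :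
    aff x v ≤ 0 := by
  have h' : AffNonneg (-v) := by
    unfold AffNonneg AffNonpos at *
    rw [linPart_neg, norm_neg, PiLp.neg_apply]
    linarith
  simpa [aff_neg] using h'.aff_nonneg hx

lemma AffNonpos.smul {v : E (d + 1)} (h : AffNonpos v) {r : ℝ} (hr : 0 ≤ r) :
    AffNonpos (r • v) := by
  unfold AffNonpos at *
  rw [linPart_smul, norm_smul, Real.norm_of_nonneg hr, PiLp.smul_apply, smul_eq_mul]
  nlinarith

lemma Kinked.neg {v : E (d + 1)} (h : Kinked v) : Kinked (-v) := by
  unfold Kinked at *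
  rwa [linPart_neg, norm_neg, PiLp.neg_apply, abs_neg]

end Kinks

section NegRep

variable {α : Type*} [InvolutiveNeg α]

/-- A choice of one of `v`, `-v` that depends only on the pair `{v, -v}`. -/
def negRep (v : α) : α := @Classical.epsilon α ⟨v⟩ fun w => w = v ∨ w = -v

lemma negRep_eq_or (v : α) : negRep v = v ∨ negRep v = -v :=
  @Classical.epsilon_spec α (fun w => w = v ∨ w = -v) ⟨v, Or.inl rfl⟩

lemma negRep_neg (v : α) : negRep (-v) = negRep v := by
  unfold negRep
  simp only [neg_neg, or_comm]

lemma negRep_negRep (v : α) : negRep (negRep v) = negRep v := by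
  rcases negRep_eq_or v with h | h
  · rw [h, h]
  · rw [h, negRep_neg, h]

lemma eq_or_eq_neg_of_negRep_eq {v w : α} (h : negRep v = negRep w) : w = v ∨ w = -v := by
  rcases negRep_eq_or v with hv | hv <;> rcases negRep_eq_or w with hw | hw
  · exact Or.inl (hw.symm.trans (h.symm.trans hv))
  · exact Or.inr (by rw [← neg_neg w, ← hw, ← h, hv])
  · exact Or.inr (by rw [← hw, ← h, hv])
  · exact Or.inl (neg_injective (hw.symm.trans (h.symm.trans hv)))

lemma norm_negRep {F : Type*} [SeminormedAddCommGroup F] (v : F) : ‖negRep v‖ = ‖v‖ := by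
  rcases negRep_eq_or v with h | h <;> simp [h]

lemma Kinked.negRep {d : ℕ} {v : E (d + 1)} (h : Kinked v) : Kinked (negRep v) := by
  rcases negRep_eq_or v with h' | h' <;> rw [h']
  exacts [h, h.neg]

end NegRep

section Uniqueness

lemma measure_setOf_inner_eq_eq_zero {F : Type*} [NormedAddCommGroup F] [InnerProductSpace ℝ F]
    [FiniteDimensional ℝ F] [MeasurableSpace F] [BorelSpace F] (μ : Measure F)
    [μ.IsAddHaarMeasure] {a : F} {c : ℝ} (h : a ≠ 0 ∨ c ≠ 0) : μ {y | ⟪y, a⟫ = c} = 0 := by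
  rcases eq_or_ne a 0 with rfl | ha
  · simp [eq_comm, h.resolve_left (not_not.2 rfl)]
  set K := LinearMap.ker (innerSL ℝ a : F →ₗ[ℝ] ℝ)
  have hK : K ≠ ⊤ := fun hK => ha <| by simpa [K] using (hK ▸ Submodule.mem_top : a ∈ K)
  set y₀ : F := (c / ‖a‖ ^ 2) • a
  have hy₀ : ⟪a, y₀⟫ = c := by
    rw [real_inner_smul_right, real_inner_self_eq_norm_sq]
    field_simp [norm_ne_zero_iff.2 ha]
  have hset : {y | ⟪y, a⟫ = c} = (fun y => -y₀ + y) ⁻¹' K := by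
    ext y
    simp only [Set.mem_ofPred_eq, Set.mem_preimage, SetLike.mem_coe, K, LinearMap.mem_ker,
      ContinuousLinearMap.coe_coe, innerSL_apply_apply, inner_add_right, inner_neg_right, hy₀,
      real_inner_comm a]
    constructor <;> intro h <;> linarith
  rw [hset, measure_preimage_add]
  exact Measure.addHaar_submodule μ K hK

variable {d : ℕ}

lemma eq_smul_of_linPart_eq_smul {p : E d} {z z₀ : E (d + 1)} {a : ℝ}
    (h : a • linPart z₀ = linPart z) (hz : aff p z = 0) (hz₀ : aff p z₀ = 0) : z = a • z₀ := by
  refine eq_of_linPart_eq (by rw [linPart_smul, h]) ?_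
  rw [aff_eq_inner, ← h, real_inner_smul_right] at hz
  rw [aff_eq_inner] at hz₀
  rw [PiLp.smul_apply, smul_eq_mul]
  linear_combination hz - a * hz₀

/-- The kink hyperplane of `z₀` is parametrized by the orthogonal complement of `linPart z₀`,
in which the other kink hyperplanes are null sets. -/
lemma exists_aff_eq_zero_and_forall_ne_zero {z₀ : E (d + 1)} (hz₀ : Kinked z₀) (hz₀1 : ‖z₀‖ = 1)
    (t : Finset (E (d + 1))) (ht : ∀ z ∈ t, ‖z‖ = 1 ∧ z ≠ z₀ ∧ z ≠ -z₀) :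
    ∃ p : E d, ‖p‖ < 1 ∧ aff p z₀ = 0 ∧ ∀ z ∈ t, aff p z ≠ 0 := by
  set h₀ := linPart z₀
  have hh₀ : 0 < ‖h₀‖ := (abs_nonneg _).trans_lt hz₀
  set p₀ : E d := (-z₀ (Fin.last d) / ‖h₀‖ ^ 2) • h₀
  have haff₀ : aff p₀ z₀ = 0 := by
    rw [aff_eq_inner, real_inner_smul_left, real_inner_self_eq_norm_sq]
    field_simp
    ring
  have hp₀ : ‖p₀‖ < 1 := by
    have : ‖p₀‖ * ‖h₀‖ = |z₀ (Fin.last d)| := by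
      rw [norm_smul, Real.norm_eq_abs, abs_div, abs_neg, abs_of_pos (by positivity : 0 < ‖h₀‖ ^ 2)]
      field_simp
    unfold Kinked at hz₀
    nlinarith [norm_nonneg p₀]
  set K : Submodule ℝ (E d) := (ℝ ∙ h₀)ᗮ
  have hKh₀ : K.starProjection h₀ = 0 :=
    K.starProjection_apply_eq_zero_iff.2 (Submodule.le_orthogonal_orthogonal _
      (Submodule.mem_span_singleton_self h₀))
  have key : ∀ y z,
      aff (p₀ + K.starProjection y) z = aff p₀ z + ⟪y, K.starProjection (linPart z)⟫ := by
    intro y z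
    rw [aff_eq_inner, aff_eq_inner, inner_add_left, K.inner_starProjection_left_eq_right]
    ring
  have hgood : ∀ z ∈ t, K.starProjection (linPart z) ≠ 0 ∨ -aff p₀ z ≠ 0 := by
    intro z hz
    by_contra! hbad
    have hmem : linPart z ∈ ℝ ∙ h₀ := by
      rw [← Submodule.orthogonal_orthogonal (ℝ ∙ h₀)]
      exact K.starProjection_apply_eq_zero_iff.1 hbad.1
    obtain ⟨a, ha⟩ := Submodule.mem_span_singleton.1 hmem
    have hza := eq_smul_of_linPart_eq_smul ha (neg_eq_zero.1 hbad.2) haff₀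
    have ha1 : |a| = 1 := by
      simpa [(ht z hz).1, hz₀1, norm_smul] using (congrArg norm hza).symm
    rcases abs_eq zero_le_one |>.1 ha1 with rfl | rfl
    · exact (ht z hz).2.1 (by simpa using hza)
    · exact (ht z hz).2.2 (by simpa using hza)
  have hnull : volume (⋃ z ∈ t, {y | ⟪y, K.starProjection (linPart z)⟫ = -aff p₀ z}) = 0 :=
    (measure_biUnion_null_iff t.countable_toSet).2 fun z hz =>
      measure_setOf_inner_eq_eq_zero volume (hgood z hz)
  obtain ⟨y, hy, hyt⟩ : ∃ y ∈ Metric.ball (0 : E d) (1 - ‖p₀‖),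
      y ∉ ⋃ z ∈ t, {y | ⟪y, K.starProjection (linPart z)⟫ = -aff p₀ z} := by
    by_contra! H
    exact (Metric.measure_ball_pos volume _ (sub_pos.2 hp₀)).ne' (measure_mono_null H hnull)
  refine ⟨p₀ + K.starProjection y, ?_, by rw [key, haff₀, hKh₀, inner_zero_right, add_zero], ?_⟩
  · rw [mem_ball_zero_iff] at hy
    linarith [norm_add_le p₀ (K.starProjection y), K.norm_starProjection_apply_le y]
  · intro z hz h0
    refine hyt (Set.mem_biUnion hz ?_)
    rw [key] at h0
    simp only [Set.mem_ofPred_eq]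
    linarith

lemma aff_add_smul (p h : E d) (s : ℝ) (z : E (d + 1)) :
    aff (p + s • h) z = aff p z + s * ⟪h, linPart z⟫ := by
  rw [aff_eq_inner, aff_eq_inner, inner_add_left, real_inner_smul_left]
  ring

/-- The second difference across the kink of `z₀`, at a point where no other kink lies, isolates
the coefficient of `z₀`. -/
lemma coeff_eq_zero_of_sum_mul_relu_add_aff_eq_zero {t : Finset (E (d + 1))}
    (ht : ∀ z ∈ t, ‖z‖ = 1 ∧ Kinked z ∧ negRep z = z) (μ : E (d + 1) → ℝ) (w : E (d + 1))
    (h : ∀ x : E d, ‖x‖ ≤ 1 → ∑ z ∈ t, μ z * relu (aff x z) + aff x w = 0)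
    {z₀ : E (d + 1)} (hz₀ : z₀ ∈ t) : μ z₀ = 0 := by
  obtain ⟨hz₀1, hz₀k, hz₀c⟩ := ht z₀ hz₀
  have ht' : ∀ z ∈ t.erase z₀, ‖z‖ = 1 ∧ z ≠ z₀ ∧ z ≠ -z₀ := by
    intro z hz
    obtain ⟨hne, hzt⟩ := Finset.mem_erase.1 hz
    refine ⟨(ht z hzt).1, hne, fun h => hne ?_⟩
    rw [← (ht z hzt).2.2, ← hz₀c, h, negRep_neg]
  obtain ⟨p, hp1, hpz₀, hpz⟩ := exists_aff_eq_zero_and_forall_ne_zero hz₀k hz₀1 _ ht'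
  set h₀ := linPart z₀
  have hh₀ : 0 < ‖h₀‖ := (abs_nonneg _).trans_lt hz₀k
  have hh₀1 : ‖h₀‖ ≤ 1 := hz₀1 ▸ norm_linPart_le z₀
  have hτ : ∀ᶠ τ in 𝓝[>] (0 : ℝ), (τ < 1 - ‖p‖ ∧ ∀ z ∈ t.erase z₀, τ < |aff p z|) ∧ 0 < τ :=
    (((eventually_lt_nhds (sub_pos.2 hp1)).and ((Finset.eventually_all _).2 fun z hz =>
      eventually_lt_nhds (abs_pos.2 (hpz z hz)))).filter_mono nhdsWithin_le_nhds).and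
      self_mem_nhdsWithin
  obtain ⟨τ, ⟨hτ1, hτt⟩, hτ0⟩ := hτ.exists
  have hball : ∀ s : ℝ, |s| ≤ τ → ‖p + s • h₀‖ ≤ 1 := fun s hs => by
    have : ‖s • h₀‖ ≤ τ := by
      rw [norm_smul, Real.norm_eq_abs]; nlinarith [abs_nonneg s]
    linarith [norm_add_le p (s • h₀)]
  have hdiff : ∑ z ∈ t, μ z * (relu (aff p z + τ * ⟪h₀, linPart z⟫) +
      relu (aff p z - τ * ⟪h₀, linPart z⟫) - 2 * relu (aff p z)) = 0 := by
    have e_pos := h (p + τ • h₀) (hball τ (abs_of_pos hτ0).le)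
    have e_neg := h (p + (-τ) • h₀) (hball (-τ) (by rw [abs_neg, abs_of_pos hτ0]))
    have e_mid := h p hp1.le
    simp only [aff_add_smul, neg_mul, ← sub_eq_add_neg] at e_pos e_neg
    calc _ = (∑ z ∈ t, μ z * relu (aff p z + τ * ⟪h₀, linPart z⟫)) +
          (∑ z ∈ t, μ z * relu (aff p z - τ * ⟪h₀, linPart z⟫)) -
          2 * ∑ z ∈ t, μ z * relu (aff p z) := by
          rw [Finset.mul_sum, ← Finset.sum_add_distrib, ← Finset.sum_sub_distrib]
          exact Finset.sum_congr rfl fun z _ => by ring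
      _ = 0 := by linear_combination e_pos + e_neg - 2 * e_mid
  rw [Finset.sum_eq_single_of_mem z₀ hz₀ fun z hz hne => ?_, hpz₀, real_inner_self_eq_norm_sq,
    zero_add, zero_sub, relu_of_nonneg (by positivity), relu_of_nonpos (by nlinarith),
    relu_of_nonpos le_rfl] at hdiff
  · refine (mul_eq_zero.1 hdiff).resolve_right ?_
    simp only [add_zero, mul_zero, sub_zero]
    positivity
  · have hlt : |τ * ⟪h₀, linPart z⟫| < |aff p z| := by
      refine lt_of_le_of_lt ?_ (hτt z (Finset.mem_erase.2 ⟨hne, hz⟩))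
      rw [abs_mul, abs_of_pos hτ0]
      exact mul_le_of_le_one_right hτ0.le ((abs_real_inner_le_norm _ _).trans
        (mul_le_one₀ hh₀1 (norm_nonneg _) ((norm_linPart_le z).trans (ht z hz).1.le)))
    rw [relu_add_add_relu_sub hlt, sub_self, mul_zero]

lemma eq_zero_of_sum_mul_relu_add_aff_eq_zero {t : Finset (E (d + 1))}
    (ht : ∀ z ∈ t, ‖z‖ = 1 ∧ Kinked z ∧ negRep z = z) (μ : E (d + 1) → ℝ) (w : E (d + 1))
    (h : ∀ x : E d, ‖x‖ ≤ 1 → ∑ z ∈ t, μ z * relu (aff x z) + aff x w = 0) :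
    (∀ z ∈ t, μ z = 0) ∧ w = 0 := by
  have hμ := fun z (hz : z ∈ t) => coeff_eq_zero_of_sum_mul_relu_add_aff_eq_zero ht μ w h hz
  refine ⟨hμ, eq_zero_of_forall_aff_eq_zero fun x hx => ?_⟩
  have hsum : ∑ z ∈ t, μ z * relu (aff x z) = 0 :=
    Finset.sum_eq_zero fun z hz => by rw [hμ z hz, zero_mul]
  simpa [hsum] using h x hx

end Uniqueness

section CanonicalForm

open scoped Classical

variable {d : ℕ} {ι : Type*}

def NoDeadNeuron (b : ι → ℝ) (u : ι → E (d + 1)) : Prop :=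
  ∀ i, b i ≠ 0 → Kinked (u i) ∨ AffNonneg (u i)

/-- The affine residue of a neuron: `σ(t) = σ(-t) + t` for a kinked neuron pointing away from
its representative, and `σ(t) = t` for a neuron that is nonnegative on the ball. -/
def affTerm (b : ι → ℝ) (u : ι → E (d + 1)) (i : ι) : E (d + 1) :=
  if Kinked (u i) ∧ negRep (u i) = u i then 0 else b i • u i

lemma mul_relu_eq_add_aff_affTerm {b : ι → ℝ} {u : ι → E (d + 1)} (hb : NoDeadNeuron b u) (i : ι)
    {x : E d} (hx : ‖x‖ ≤ 1) :
    b i * relu (aff x (u i)) = (if Kinked (u i) then b i * relu (aff x (negRep (u i))) else 0) +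
      aff x (affTerm b u i) := by
  unfold affTerm
  by_cases hk : Kinked (u i)
  · by_cases hc : negRep (u i) = u i
    · simp [hk, hc, aff_zero]
    · have hneg : negRep (u i) = -u i := (negRep_eq_or (u i)).resolve_left hc
      rw [if_pos hk, if_neg (fun h => hc h.2), hneg, aff_smul, aff_neg]
      linear_combination b i * relu_sub_relu_neg (aff x (u i))
  · rw [if_neg hk, if_neg (fun h => hk h.1), zero_add, aff_smul]
    rcases eq_or_ne (b i) 0 with h0 | h0
    · simp [h0]
    · rw [relu_of_nonneg (((hb i h0).resolve_left hk).aff_nonneg hx)]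

variable [Fintype ι]

def kinkedIdx (u : ι → E (d + 1)) : Finset ι := Finset.univ.filter fun i => Kinked (u i)

def kinkCoeff (b : ι → ℝ) (u : ι → E (d + 1)) (z : E (d + 1)) : ℝ :=
  ∑ i ∈ kinkedIdx u with negRep (u i) = z, b i

def kinkSupport (b : ι → ℝ) (u : ι → E (d + 1)) : Finset (E (d + 1)) :=
  ((kinkedIdx u).image fun i => negRep (u i)).filter fun z => kinkCoeff b u z ≠ 0

def affPart (b : ι → ℝ) (u : ι → E (d + 1)) : E (d + 1) := ∑ i, affTerm b u i

lemma mem_kinkedIdx {u : ι → E (d + 1)} {i : ι} : i ∈ kinkedIdx u ↔ Kinked (u i) := by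
  simp [kinkedIdx]

lemma exists_of_kinkCoeff_ne_zero {b : ι → ℝ} {u : ι → E (d + 1)} {z : E (d + 1)}
    (h : kinkCoeff b u z ≠ 0) : ∃ i, Kinked (u i) ∧ b i ≠ 0 ∧ negRep (u i) = z := by
  obtain ⟨i, hi, hb⟩ := Finset.exists_ne_zero_of_sum_ne_zero h
  rw [Finset.mem_filter, mem_kinkedIdx] at hi
  exact ⟨i, hi.1, hb, hi.2⟩

lemma mem_kinkSupport {b : ι → ℝ} {u : ι → E (d + 1)} {z : E (d + 1)} :
    z ∈ kinkSupport b u ↔ kinkCoeff b u z ≠ 0 := by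
  refine ⟨fun h => (Finset.mem_filter.1 h).2, fun h => Finset.mem_filter.2 ⟨?_, h⟩⟩
  obtain ⟨i, hi, -, rfl⟩ := exists_of_kinkCoeff_ne_zero h
  exact Finset.mem_image_of_mem _ (mem_kinkedIdx.2 hi)

lemma kinkSupport_subset_image (b : ι → ℝ) (u : ι → E (d + 1)) :
    kinkSupport b u ⊆ (Finset.univ.filter fun i => Kinked (u i) ∧ b i ≠ 0).image
      fun i => negRep (u i) := by
  intro z hz
  obtain ⟨i, hi, hb, rfl⟩ := exists_of_kinkCoeff_ne_zero (mem_kinkSupport.1 hz)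
  exact Finset.mem_image_of_mem _ (Finset.mem_filter.2 ⟨Finset.mem_univ i, hi, hb⟩)

lemma norm_eq_one_and_kinked_of_mem_kinkSupport {b : ι → ℝ} {u : ι → E (d + 1)}
    (hu : ∀ i, ‖u i‖ = 1) {z : E (d + 1)} (hz : z ∈ kinkSupport b u) :
    ‖z‖ = 1 ∧ Kinked z ∧ negRep z = z := by
  obtain ⟨i, hi, -, rfl⟩ := exists_of_kinkCoeff_ne_zero (mem_kinkSupport.1 hz)
  exact ⟨(norm_negRep _).trans (hu i), hi.negRep, negRep_negRep _⟩

lemma kinkCoeff_eq_sum {b : ι → ℝ} {u : ι → E (d + 1)} {z : E (d + 1)} (T : Finset ι)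
    (hT : ∀ i ∈ T, Kinked (u i) ∧ negRep (u i) = z)
    (hout : ∀ i ∉ T, Kinked (u i) → negRep (u i) = z → b i = 0) :
    kinkCoeff b u z = ∑ i ∈ T, b i := by
  refine (Finset.sum_subset (fun i hi => ?_) fun i hi hiT => ?_).symm
  · exact Finset.mem_filter.2 ⟨mem_kinkedIdx.2 (hT i hi).1, (hT i hi).2⟩
  · obtain ⟨hi, hz⟩ := Finset.mem_filter.1 hi
    exact hout i hiT (mem_kinkedIdx.1 hi) hz

lemma sum_mul_relu_eq_kinkSupport {b : ι → ℝ} {u : ι → E (d + 1)} (hb : NoDeadNeuron b u)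
    {x : E d} (hx : ‖x‖ ≤ 1) :
    ∑ i, b i * relu (aff x (u i)) =
      ∑ z ∈ kinkSupport b u, kinkCoeff b u z * relu (aff x z) + aff x (affPart b u) := by
  have hkink : ∑ i ∈ kinkedIdx u, b i * relu (aff x (negRep (u i))) =
      ∑ z ∈ kinkSupport b u, kinkCoeff b u z * relu (aff x z) := by
    rw [kinkSupport, Finset.sum_filter_of_ne fun z _ h => left_ne_zero_of_mul h,
      ← Finset.sum_fiberwise_of_maps_to fun i hi =>
        Finset.mem_image_of_mem (fun i => negRep (u i)) hi]
    refine Finset.sum_congr rfl fun z _ => ?_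
    rw [kinkCoeff, Finset.sum_mul]
    exact Finset.sum_congr rfl fun i hi => by rw [(Finset.mem_filter.1 hi).2]
  simp only [Finset.sum_congr rfl fun i _ => mul_relu_eq_add_aff_affTerm hb i hx,
    Finset.sum_add_distrib, ← Finset.sum_filter, affPart, aff_sum]
  rw [← hkink]
  rfl

lemma sum_kinkCoeff_mul_relu_of_subset {b : ι → ℝ} {u : ι → E (d + 1)} {t : Finset (E (d + 1))}
    (ht : kinkSupport b u ⊆ t) (x : E d) :
    ∑ z ∈ t, kinkCoeff b u z * relu (aff x z) =
      ∑ z ∈ kinkSupport b u, kinkCoeff b u z * relu (aff x z) :=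
  (Finset.sum_subset ht fun _ _ hz => by rw [not_not.1 (mt mem_kinkSupport.2 hz), zero_mul]).symm

/-- What a unit representation of mass `s` tells about its canonical form `(a, W)`
(`kinkBounded_of_norm_eq_one`); `F` ranges over sets of flipped representatives. -/
def KinkBounded (a : E (d + 1) → ℝ) (W : E (d + 1)) (s : ℝ) : Prop :=
  (∀ G : Finset (E (d + 1)), ∑ z ∈ G, |a z| ≤ s) ∧
    ∀ F : Finset (E (d + 1)), ‖W + ∑ z ∈ F, a z • z‖ ≤ s

lemma sum_abs_kinkCoeff_le (b : ι → ℝ) (u : ι → E (d + 1)) (G : Finset (E (d + 1))) :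
    ∑ z ∈ G, |kinkCoeff b u z| ≤ ∑ i, |b i| :=
  calc ∑ z ∈ G, |kinkCoeff b u z|
      ≤ ∑ z ∈ G, ∑ i ∈ (kinkedIdx u).filter (fun i => negRep (u i) ∈ G) with negRep (u i) = z,
          |b i| := by
        refine Finset.sum_le_sum fun z hz => (Finset.abs_sum_le_sum_abs _ _).trans_eq ?_
        rw [Finset.filter_filter]
        refine Finset.sum_congr (Finset.filter_congr fun i _ => ?_) fun _ _ => rfl
        exact ⟨fun h => ⟨h ▸ hz, h⟩, fun h => h.2⟩
    _ = ∑ i ∈ (kinkedIdx u).filter (fun i => negRep (u i) ∈ G), |b i| :=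
        Finset.sum_fiberwise_of_maps_to (fun i hi => (Finset.mem_filter.1 hi).2) _
    _ ≤ ∑ i, |b i| :=
        Finset.sum_le_sum_of_subset_of_nonneg (Finset.subset_univ _) fun _ _ _ => abs_nonneg _

/-- Flipping any set `F` of kinked representatives back changes each affine term to either `0`
or `b i • u i`. -/
lemma norm_affPart_add_sum_le (b : ι → ℝ) (u : ι → E (d + 1)) (F : Finset (E (d + 1))) :
    ‖affPart b u + ∑ z ∈ F, kinkCoeff b u z • z‖ ≤ ∑ i, |b i| * ‖u i‖ := by
  have hF : ∑ z ∈ F, kinkCoeff b u z • z =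
      ∑ i, if Kinked (u i) ∧ negRep (u i) ∈ F then b i • negRep (u i) else 0 := by
    rw [← Finset.sum_filter, ← Finset.sum_fiberwise_of_maps_to
      (g := fun i => negRep (u i)) (t := F) fun i hi => (Finset.mem_filter.1 hi).2.2]
    refine Finset.sum_congr rfl fun z hz => ?_
    rw [kinkCoeff, Finset.sum_smul]
    refine Finset.sum_congr (Finset.ext fun i => ?_) fun i hi => ?_
    · simp only [Finset.mem_filter, Finset.mem_univ, true_and, mem_kinkedIdx]
      exact ⟨fun h => ⟨⟨h.1, h.2 ▸ hz⟩, h.2⟩, fun h => ⟨h.1.1, h.2⟩⟩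
    · rw [(Finset.mem_filter.1 hi).2]
  rw [hF, affPart, ← Finset.sum_add_distrib]
  refine (norm_sum_le _ _).trans (Finset.sum_le_sum fun i _ => ?_)
  set r := affTerm b u i + if Kinked (u i) ∧ negRep (u i) ∈ F then b i • negRep (u i) else 0
    with hr
  have hterm : r = 0 ∨ r = b i • u i := by
    rw [hr, affTerm]
    split_ifs with h₁ h₂ h₂ <;> rcases negRep_eq_or (u i) with hc | hc <;> simp_all
  rcases hterm with h | h <;> rw [h]
  · rw [norm_zero]; positivity
  · rw [norm_smul, Real.norm_eq_abs]

lemma kinkBounded_of_norm_eq_one {b : ι → ℝ} {u : ι → E (d + 1)} (hu : ∀ i, ‖u i‖ = 1) :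
    KinkBounded (kinkCoeff b u) (affPart b u) (∑ i, |b i|) :=
  ⟨sum_abs_kinkCoeff_le b u, fun F => by simpa [hu] using norm_affPart_add_sum_le b u F⟩

lemma kinkCoeff_eq_and_affPart_eq {κ : Type*} [Fintype κ] {b : ι → ℝ} {u : ι → E (d + 1)}
    {c : κ → ℝ} {v : κ → E (d + 1)} (hu : ∀ i, ‖u i‖ = 1) (hv : ∀ j, ‖v j‖ = 1)
    (hb : NoDeadNeuron b u) (hc : NoDeadNeuron c v)
    (h : ∀ x : E d, ‖x‖ ≤ 1 → ∑ i, b i * relu (aff x (u i)) = ∑ j, c j * relu (aff x (v j))) :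
    kinkCoeff b u = kinkCoeff c v ∧ affPart b u = affPart c v := by
  set t := kinkSupport b u ∪ kinkSupport c v
  obtain ⟨hμ, hw⟩ := eq_zero_of_sum_mul_relu_add_aff_eq_zero (t := t)
    (fun z hz => (Finset.mem_union.1 hz).elim (norm_eq_one_and_kinked_of_mem_kinkSupport hu)
      (norm_eq_one_and_kinked_of_mem_kinkSupport hv))
    (kinkCoeff b u - kinkCoeff c v) (affPart b u - affPart c v) fun x hx => by
      have hbc := h x hx
      rw [sum_mul_relu_eq_kinkSupport hb hx, sum_mul_relu_eq_kinkSupport hc hx,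
        ← sum_kinkCoeff_mul_relu_of_subset (t := t) Finset.subset_union_left,
        ← sum_kinkCoeff_mul_relu_of_subset (t := t) Finset.subset_union_right] at hbc
      simp only [Pi.sub_apply, sub_mul, Finset.sum_sub_distrib]
      rw [sub_eq_add_neg (affPart b u), aff_add, aff_neg]
      linarith
  refine ⟨funext fun z => ?_, sub_eq_zero.1 hw⟩
  by_cases hz : z ∈ t
  · exact sub_eq_zero.1 (hμ z hz)
  · simp only [t, Finset.mem_union, mem_kinkSupport, not_or, not_not] at hz
    rw [hz.1, hz.2]

end CanonicalForm

section Normalization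

open scoped Classical

variable {d : ℕ}

def unitDir (w : E (d + 1)) : E (d + 1) :=
  if w = 0 then EuclideanSpace.single (Fin.last d) 1 else ‖w‖⁻¹ • w

def unitCoeff (a : ℝ) (w : E (d + 1)) : ℝ := if AffNonpos w then 0 else a * ‖w‖

lemma norm_unitDir (w : E (d + 1)) : ‖unitDir w‖ = 1 := by
  unfold unitDir
  split_ifs with hw
  · simp
  · rw [norm_smul, norm_inv, norm_norm, inv_mul_cancel₀ (norm_ne_zero_iff.2 hw)]

lemma smul_unitDir {w : E (d + 1)} (hw : w ≠ 0) : ‖w‖ • unitDir w = w := by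
  rw [unitDir, if_neg hw, smul_smul, mul_inv_cancel₀ (norm_ne_zero_iff.2 hw), one_smul]

lemma abs_unitCoeff_le (a : ℝ) (w : E (d + 1)) : |unitCoeff a w| ≤ |a| * ‖w‖ := by
  unfold unitCoeff
  split_ifs
  · rw [abs_zero]; positivity
  · rw [abs_mul, abs_norm]

lemma affNonpos_zero : AffNonpos (0 : E (d + 1)) := by
  simp [AffNonpos, show linPart (0 : E (d + 1)) = 0 by ext; simp]

lemma unitCoeff_mul_relu (a : ℝ) (w : E (d + 1)) {x : E d} (hx : ‖x‖ ≤ 1) :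
    unitCoeff a w * relu (aff x (unitDir w)) = a * relu (aff x w) := by
  unfold unitCoeff
  split_ifs with hw
  · rw [relu_of_nonpos (hw.aff_nonpos hx)]; ring
  · have hw0 : w ≠ 0 := fun h => hw (h ▸ affNonpos_zero)
    conv_rhs => rw [← smul_unitDir hw0, aff_smul, relu_mul_of_nonneg (norm_nonneg w)]
    ring

lemma noDeadNeuron_unitCoeff {ι : Type*} (a : ι → ℝ) (w : ι → E (d + 1)) :
    NoDeadNeuron (fun i => unitCoeff (a i) (w i)) fun i => unitDir (w i) := by
  intro i hi
  have hw : ¬AffNonpos (w i) := fun h => hi (if_pos h)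
  have hw0 : w i ≠ 0 := fun h => hw (h ▸ affNonpos_zero)
  refine (kinked_or_affNonneg_or_affNonpos _).imp_right (Or.resolve_right · fun h => hw ?_)
  simpa [smul_unitDir hw0] using h.smul (norm_nonneg (w i))

lemma exists_unit_rep {ι : Type*} [Fintype ι] (a : ι → ℝ) (w : ι → E (d + 1)) :
    ∃ (c : ι → ℝ) (v : ι → E (d + 1)), (∀ i, ‖v i‖ = 1) ∧ NoDeadNeuron c v ∧
      (∀ x : E d, ‖x‖ ≤ 1 →
        ∑ i, a i * relu (aff x (w i)) = ∑ i, c i * relu (aff x (v i))) ∧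
      ∑ i, |c i| ≤ ∑ i, |a i| * ‖w i‖ :=
  ⟨_, _, fun i => norm_unitDir (w i), noDeadNeuron_unitCoeff a w,
    fun _ hx => Finset.sum_congr rfl fun _ _ => (unitCoeff_mul_relu _ _ hx).symm,
    Finset.sum_le_sum fun _ _ => abs_unitCoeff_le _ _⟩

lemma kappaF_le_pathNorm {N : ℕ} {f : E d → ℝ} (θ : Params d N)
    (hθ : ∀ x : E d, ‖x‖ ≤ 1 → f x = networkFn θ x) : kappaF f ≤ pathNorm θ := by
  obtain ⟨c, v, hv, -, hcv, hc⟩ := exists_unit_rep θ.1 θ.2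
  unfold kappaF
  refine le_trans (csInf_le ⟨0, ?_⟩ ?_) hc
  · rintro _ ⟨m, c, v, -, -, rfl⟩
    positivity
  · exact ⟨N, c, v, hv, fun x hx => (hθ x hx).trans (hcv x hx), rfl⟩

lemma exists_params_eq_of_card_le {ι : Type*} [Fintype ι] {N : ℕ} (hN : Fintype.card ι ≤ N)
    (a : ι → ℝ) (w : ι → E (d + 1)) :
    ∃ θ : Params d N, (∀ x : E d, networkFn θ x = ∑ i, a i * relu (aff x (w i))) ∧
      pathNorm θ = ∑ i, |a i| * ‖w i‖ := by
  obtain ⟨e⟩ := Function.Embedding.nonempty_of_card_le (hN.trans (Fintype.card_fin N).ge)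
  have hsum : ∀ g : ℝ → E (d + 1) → ℝ, g 0 0 = 0 →
      ∑ j, g (Function.extend e a 0 j) (Function.extend e w 0 j) = ∑ i, g (a i) (w i) :=
    fun g hg => (Fintype.sum_of_injective e e.injective _ _
      (fun j hj => by simp [Function.extend_apply' _ _ _ fun h => hj h, hg])
      fun i => by simp [e.injective.extend_apply]).symm
  exact ⟨((Function.extend e a 0, Function.extend e w 0) : Params d N),
    fun x => hsum (fun a w => a * relu (aff x w)) (by simp),
    hsum (fun a w => |a| * ‖w‖) (by simp)⟩

end Normalization

section Construction

open scoped Classical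

variable {d : ℕ} {ι : Type*}

lemma KinkBounded.mono {a : E (d + 1) → ℝ} {W : E (d + 1)} {s t : ℝ} (h : KinkBounded a W s)
    (hst : s ≤ t) : KinkBounded a W t :=
  ⟨fun G => (h.1 G).trans hst, fun F => (h.2 F).trans hst⟩

lemma KinkBounded.nonneg {a : E (d + 1) → ℝ} {W : E (d + 1)} {s : ℝ} (h : KinkBounded a W s) :
    0 ≤ s := by
  simpa using h.1 ∅

/-- With two spare neurons the canonical form is itself a network, the affine part `W` being
`σ(W) - σ(-W)`. -/
lemma exists_params_of_card_kinkSupport_add_two_le [Fintype ι] {N : ℕ} {b : ι → ℝ}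
    {u : ι → E (d + 1)} (hu : ∀ i, ‖u i‖ = 1) (hb : NoDeadNeuron b u) {s : ℝ}
    (hB : KinkBounded (kinkCoeff b u) (affPart b u) s) (hN : (kinkSupport b u).card + 2 ≤ N) :
    ∃ θ : Params d N, (∀ x : E d, ‖x‖ ≤ 1 → networkFn θ x = ∑ i, b i * relu (aff x (u i))) ∧
      pathNorm θ ≤ 3 * s := by
  set S := kinkSupport b u
  obtain ⟨θ, hθ, hθn⟩ := exists_params_eq_of_card_le (ι := S ⊕ Fin 2) (by simpa using hN)
    (Sum.elim (fun z => kinkCoeff b u z) ![1, -1])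
    (Sum.elim (fun z => (z : E (d + 1))) ![affPart b u, -affPart b u])
  refine ⟨θ, fun x hx => ?_, ?_⟩
  · rw [hθ, sum_mul_relu_eq_kinkSupport hb hx, Fintype.sum_sum_type, Fin.sum_univ_two]
    simp only [Sum.elim_inl, Sum.elim_inr, Matrix.cons_val_zero, Matrix.cons_val_one, aff_neg]
    rw [Finset.sum_coe_sort S fun z => kinkCoeff b u z * relu (aff x z)]
    linear_combination relu_sub_relu_neg (aff x (affPart b u))
  · rw [hθn, Fintype.sum_sum_type, Fin.sum_univ_two]
    simp only [Sum.elim_inl, Sum.elim_inr, Matrix.cons_val_zero, Matrix.cons_val_one, norm_neg,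
      abs_one, abs_neg, one_mul]
    rw [Finset.sum_coe_sort S fun z => |kinkCoeff b u z| * ‖z‖]
    rw [Finset.sum_congr rfl fun z hz => by
      rw [(norm_eq_one_and_kinked_of_mem_kinkSupport hu hz).1, mul_one]]
    have hW := hB.2 ∅
    rw [Finset.sum_empty, add_zero] at hW
    linarith [hB.1 S]

/-- The residues of `S` are `-kinkCoeff z • z` for the flipped representatives `z`, so the
residues outside `S` sum to one of the vectors bounded in `KinkBounded`. -/
lemma norm_sum_affTerm_compl_le [Fintype ι] {b : ι → ℝ} {u : ι → E (d + 1)} {s : ℝ}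
    (hB : KinkBounded (kinkCoeff b u) (affPart b u) s) (S : Finset ι)
    (hS : ∀ i ∈ S, Kinked (u i)) (hinj : Set.InjOn (fun i => negRep (u i)) S)
    (hSb : ∀ i ∈ S, b i = kinkCoeff b u (negRep (u i))) :
    ‖∑ i ∈ Sᶜ, affTerm b u i‖ ≤ s := by
  set F := (S.filter fun i => negRep (u i) ≠ u i).image fun i => negRep (u i)
  have hflip : ∑ i ∈ S, affTerm b u i = -∑ z ∈ F, kinkCoeff b u z • z := by
    rw [Finset.sum_image (Set.InjOn.mono (Finset.coe_subset.2 (Finset.filter_subset _ _)) hinj),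
      ← Finset.sum_neg_distrib, Finset.sum_filter]
    refine Finset.sum_congr rfl fun i hi => ?_
    unfold affTerm
    by_cases hc : negRep (u i) = u i
    · simp [hS i hi, hc]
    · rw [if_neg fun h => hc h.2, if_pos hc, ← hSb i hi, (negRep_eq_or (u i)).resolve_left hc,
        smul_neg, neg_neg]
  have hcompl : ∑ i ∈ Sᶜ, affTerm b u i = affPart b u + ∑ z ∈ F, kinkCoeff b u z • z := by
    rw [affPart, ← Finset.sum_add_sum_compl S, hflip]
    abel
  rw [hcompl]
  exact hB.2 F

lemma sum_abs_eq_norm_sum_smul {b : ι → ℝ} {u : ι → E (d + 1)} (hu : ∀ i, ‖u i‖ = 1)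
    (T : Finset ι) (hT : ∀ i ∈ T, ∀ j ∈ T, b i ≠ 0 → b j ≠ 0 → i = j) :
    ∑ i ∈ T, |b i| = ‖∑ i ∈ T, b i • u i‖ := by
  by_cases h : ∃ i ∈ T, b i ≠ 0
  · obtain ⟨i, hi, hbi⟩ := h
    have hzero : ∀ j ∈ T, j ≠ i → b j = 0 := fun j hj hji =>
      by_contra fun hbj => hji (hT j hj i hi hbj hbi)
    rw [Finset.sum_eq_single_of_mem i hi fun j hj hji => by rw [hzero j hj hji, abs_zero],
      Finset.sum_eq_single_of_mem i hi fun j hj hji => by rw [hzero j hj hji, zero_smul],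
      norm_smul, hu, mul_one, Real.norm_eq_abs]
  · push Not at h
    rw [Finset.sum_eq_zero fun i hi => by rw [h i hi, abs_zero],
      Finset.sum_eq_zero fun i hi => by rw [h i hi, zero_smul], norm_zero]

lemma sum_abs_le_two_mul_of_injOn [Fintype ι] {b : ι → ℝ} {u : ι → E (d + 1)} {s : ℝ}
    (hu : ∀ i, ‖u i‖ = 1) (hB : KinkBounded (kinkCoeff b u) (affPart b u) s)
    (hinj : Set.InjOn (fun i => negRep (u i)) {i | Kinked (u i) ∧ b i ≠ 0})
    (hlin : {i | ¬Kinked (u i) ∧ b i ≠ 0}.Subsingleton) :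
    ∑ i, |b i| ≤ 2 * s := by
  set S := Finset.univ.filter fun i => Kinked (u i) ∧ b i ≠ 0
  have hSinj : Set.InjOn (fun i => negRep (u i)) S := by simpa [S] using hinj
  have hSb : ∀ i ∈ S, b i = kinkCoeff b u (negRep (u i)) := by
    intro i hi
    rw [kinkCoeff_eq_sum {i} (by simpa using (Finset.mem_filter.1 hi).2.1) fun j hj hjk hjz => ?_,
      Finset.sum_singleton]
    by_contra hbj
    exact hj (Finset.mem_singleton.2 (hSinj (by simp [S, hjk, hbj]) hi hjz))
  have hcompl : ∀ i ∈ Sᶜ, affTerm b u i = b i • u i := by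
    intro i hi
    unfold affTerm
    split_ifs with h
    · have : b i = 0 := by_contra fun hb => Finset.mem_compl.1 hi (by simp [S, h.1, hb])
      simp [this]
    · rfl
  have hS : ∑ i ∈ S, |b i| ≤ s :=
    calc ∑ i ∈ S, |b i| = ∑ z ∈ S.image fun i => negRep (u i), |kinkCoeff b u z| := by
          rw [Finset.sum_image hSinj]
          exact Finset.sum_congr rfl fun i hi => by rw [hSb i hi]
      _ ≤ s := hB.1 _
  have hSc : ∑ i ∈ Sᶜ, |b i| ≤ s := by
    rw [sum_abs_eq_norm_sum_smul hu Sᶜ fun i hi j hj hbi hbj => hlin ⟨?_, hbi⟩ ⟨?_, hbj⟩,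
      ← Finset.sum_congr rfl hcompl]
    · exact norm_sum_affTerm_compl_le hB S (fun i hi => (Finset.mem_filter.1 hi).2.1) hSinj hSb
    · exact fun hk => Finset.mem_compl.1 hi (by simp [S, hk, hbi])
    · exact fun hk => Finset.mem_compl.1 hj (by simp [S, hk, hbj])
  rw [← Finset.sum_add_sum_compl S]
  linarith

/-- The residue `b j₂ • u j₂` of the flipped neuron is bounded by `s`, and
`|b j₁| ≤ |b j₁ + b j₂| + |b j₂|`. -/
lemma sum_abs_le_three_mul_of_neg [Fintype ι] {b : ι → ℝ} {u : ι → E (d + 1)} {s : ℝ}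
    (hu : ∀ i, ‖u i‖ = 1) (hB : KinkBounded (kinkCoeff b u) (affPart b u) s)
    (hk : ∀ i, Kinked (u i)) {j₁ j₂ : ι} (hne : j₁ ≠ j₂) (hj₁ : negRep (u j₁) = u j₁)
    (hj₂ : u j₂ = -u j₁)
    (hinj₁ : Set.InjOn (fun i => negRep (u i)) (Finset.univ.erase j₁ : Finset ι))
    (hinj₂ : Set.InjOn (fun i => negRep (u i)) (Finset.univ.erase j₂ : Finset ι)) :
    ∑ i, |b i| ≤ 3 * s := by
  set S : Finset ι := {j₁, j₂}ᶜ
  have hS : ∀ i ∈ S, i ≠ j₁ ∧ i ≠ j₂ := fun i hi => by simpa [S, not_or] using hi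
  have hneg₂ : negRep (u j₂) = u j₁ := by rw [hj₂, negRep_neg, hj₁]
  have hfib : ∀ i ∈ S, ∀ j, negRep (u j) = negRep (u i) → j = i := by
    intro i hi j hj
    by_cases hj₂' : j = j₂
    · subst hj₂'
      exact absurd (hinj₁ (by simp [(hS i hi).1]) (by simp [hne.symm]) hj.symm) (hS i hi).2
    · exact hinj₂ (by simp [hj₂']) (by simp [(hS i hi).2]) hj
  have hfib₁ : ∀ j, negRep (u j) = u j₁ → j = j₁ ∨ j = j₂ := fun j hj =>
    (em (j = j₂)).elim Or.inr fun hj₂' =>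
      Or.inl (hinj₂ (by simp [hj₂']) (by simp [hne]) (hj.trans hj₁.symm))
  have hSinj : Set.InjOn (fun i => negRep (u i)) S := fun i hi j _ h =>
    (hfib i hi j h.symm).symm
  have hSb : ∀ i ∈ S, b i = kinkCoeff b u (negRep (u i)) := fun i hi => by
    rw [kinkCoeff_eq_sum {i} (by simpa using hk i) fun j hj _ hjz =>
      absurd (hfib i hi j hjz) (Finset.notMem_singleton.1 hj), Finset.sum_singleton]
  have hpair : kinkCoeff b u (u j₁) = b j₁ + b j₂ := by
    rw [kinkCoeff_eq_sum {j₁, j₂} (by simp [hk, hj₁, hneg₂]) fun j hj _ hjz => ?_,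
      Finset.sum_pair hne]
    rcases hfib₁ j hjz with rfl | rfl <;> simp at hj
  have hnot : u j₁ ∉ S.image fun i => negRep (u i) := fun h => by
    obtain ⟨i, hi, hiz⟩ := Finset.mem_image.1 h
    rcases hfib₁ i hiz with rfl | rfl
    exacts [(hS _ hi).1 rfl, (hS _ hi).2 rfl]
  have hrest : ∑ i ∈ S, |b i| + |b j₁ + b j₂| ≤ s := by
    have h := hB.1 (insert (u j₁) (S.image fun i => negRep (u i)))
    rw [Finset.sum_insert hnot, Finset.sum_image hSinj, hpair] at h
    rw [Finset.sum_congr rfl fun i hi => by rw [hSb i hi]]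
    linarith
  have hb₂ : |b j₂| ≤ s := by
    have hne₂ : u j₁ ≠ u j₂ := fun h => by
      have h2 : ‖u j₁ + u j₁‖ = 0 := by
        rw [hj₂] at h
        nth_rewrite 2 [h]
        simp
      rw [← two_smul ℝ, norm_smul, hu] at h2
      norm_num at h2
    have h := norm_sum_affTerm_compl_le hB S (fun i _ => hk i) hSinj hSb
    rwa [compl_compl, Finset.sum_pair hne, affTerm, affTerm, if_pos ⟨hk j₁, hj₁⟩,
      if_neg fun h => hne₂ (hneg₂.symm.trans h.2), zero_add, norm_smul, hu, mul_one,
      Real.norm_eq_abs] at h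
  calc ∑ i, |b i| = ∑ i ∈ S, |b i| + (|b j₁| + |b j₂|) := by
        rw [← Finset.sum_add_sum_compl S, compl_compl, Finset.sum_pair hne]
    _ ≤ ∑ i ∈ S, |b i| + (|b j₁ + b j₂| + 2 * |b j₂|) := by
        have := abs_sub (b j₁ + b j₂) (b j₂)
        rw [add_sub_cancel_right] at this
        linarith
    _ ≤ 3 * s := by linarith

lemma Finset.eq_univ_and_injOn_erase_of_card_le {α β : Type*} [Fintype α] [DecidableEq α]
    [DecidableEq β] {s : Finset α} {f : α → β} {a₁ a₂ : α} (h₁ : a₁ ∈ s) (h₂ : a₂ ∈ s)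
    (hne : a₁ ≠ a₂) (hf : f a₁ = f a₂) (hcard : Fintype.card α ≤ (s.image f).card + 1) :
    s = Finset.univ ∧ Set.InjOn f (Finset.univ.erase a₂ : Finset α) := by
  have himg : s.image f = (s.erase a₂).image f := by
    refine le_antisymm (fun y hy => ?_) (Finset.image_subset_image (Finset.erase_subset _ _))
    obtain ⟨x, hx, rfl⟩ := Finset.mem_image.1 hy
    by_cases hx₂ : x = a₂
    · exact Finset.mem_image.2 ⟨a₁, Finset.mem_erase.2 ⟨hne, h₁⟩, hx₂ ▸ hf⟩
    · exact Finset.mem_image_of_mem f (Finset.mem_erase.2 ⟨hx₂, hx⟩)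
  have himg_le : (s.image f).card ≤ s.card - 1 := by
    rw [himg, ← Finset.card_erase_of_mem h₂]
    exact Finset.card_image_le
  have hpos := Finset.card_pos.2 ⟨a₁, h₁⟩
  have hs : s = Finset.univ :=
    Finset.eq_univ_of_card s (le_antisymm (Finset.card_le_univ s) (by omega))
  subst hs
  refine ⟨rfl, Finset.card_image_iff.1 (le_antisymm Finset.card_image_le ?_)⟩
  rw [Finset.card_erase_of_mem (Finset.mem_univ _), Finset.card_univ, ← himg]
  omega

/-- Without two spare neurons, at most one pair of kinked neurons is parallel: an equal pair is
merged, an opposite pair is kept. -/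
lemma exists_sum_abs_le_three_mul [Fintype ι] {b : ι → ℝ} {u : ι → E (d + 1)} {s : ℝ}
    (hu : ∀ i, ‖u i‖ = 1) (hb : NoDeadNeuron b u) (hB : KinkBounded (kinkCoeff b u) (affPart b u) s)
    (hcard : Fintype.card ι ≤ (kinkSupport b u).card + 1) :
    ∃ b' : ι → ℝ, (∀ x : E d, ‖x‖ ≤ 1 →
      ∑ i, b' i * relu (aff x (u i)) = ∑ i, b i * relu (aff x (u i))) ∧ ∑ i, |b' i| ≤ 3 * s := by
  have hs := hB.nonneg
  set S := Finset.univ.filter fun i => Kinked (u i) ∧ b i ≠ 0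
  have hS : Fintype.card ι ≤ (S.image fun i => negRep (u i)).card + 1 :=
    hcard.trans (Nat.add_le_add_right (Finset.card_le_card (kinkSupport_subset_image b u)) 1)
  by_cases hinj : Set.InjOn (fun i => negRep (u i)) S
  · have hSc : Sᶜ.card ≤ 1 := by
      rw [Finset.card_compl, ← Finset.card_image_of_injOn hinj]
      omega
    refine ⟨b, fun _ _ => rfl, (sum_abs_le_two_mul_of_injOn hu hB (by simpa [S] using hinj)
      fun i hi j hj => Finset.card_le_one.1 hSc i (by simp [S, hi.1]) j (by simp [S, hj.1])).trans
        (by linarith)⟩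
  obtain ⟨i₁, hi₁, i₂, hi₂, heq, hne⟩ :
      ∃ i₁ ∈ S, ∃ i₂ ∈ S, negRep (u i₁) = negRep (u i₂) ∧ i₁ ≠ i₂ := by
    simpa [Set.InjOn] using hinj
  obtain ⟨hSu, hinj₂⟩ := Finset.eq_univ_and_injOn_erase_of_card_le hi₁ hi₂ hne heq hS
  obtain ⟨-, hinj₁⟩ := Finset.eq_univ_and_injOn_erase_of_card_le hi₂ hi₁ hne.symm heq.symm hS
  have hk : ∀ i, Kinked (u i) := fun i => (Finset.mem_filter.1 (hSu ▸ Finset.mem_univ i)).2.1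
  rcases eq_or_eq_neg_of_negRep_eq heq with hsame | hopp
  · set b' : ι → ℝ := fun i => b i + (if i = i₁ then b i₂ else 0) - (if i = i₂ then b i₂ else 0)
    have hfun : ∀ x : E d, ∑ i, b' i * relu (aff x (u i)) = ∑ i, b i * relu (aff x (u i)) := by
      intro x
      simp only [b', add_mul, sub_mul, ite_mul, zero_mul, Finset.sum_add_distrib,
        Finset.sum_sub_distrib, Finset.sum_ite_eq', Finset.mem_univ, if_true, hsame]
      ring
    obtain ⟨hκ, hA⟩ := kinkCoeff_eq_and_affPart_eq hu hu (fun i _ => Or.inl (hk i)) hb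
      fun x _ => hfun x
    refine ⟨b', fun x _ => hfun x, (sum_abs_le_two_mul_of_injOn hu (hκ ▸ hA ▸ hB) ?_
      fun i hi => absurd (hk i) hi.1).trans (by linarith)⟩
    refine Set.InjOn.mono (fun i hi => ?_) hinj₂
    simp only [Finset.coe_erase, Finset.coe_univ, Set.mem_sdiff, Set.mem_univ,
      Set.mem_singleton_iff, true_and]
    rintro rfl
    exact hi.2 (by simp [b', hne.symm])
  · rcases negRep_eq_or (u i₁) with hc | hc
    · exact ⟨b, fun _ _ => rfl, sum_abs_le_three_mul_of_neg hu hB hk hne hc hopp hinj₁ hinj₂⟩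
    · exact ⟨b, fun _ _ => rfl, sum_abs_le_three_mul_of_neg hu hB hk hne.symm
        (by rw [← heq, hc, ← hopp]) (by rw [hopp, neg_neg]) hinj₂ hinj₁⟩

end Construction

lemma exists_params_pathNorm_le_three_mul {d N : ℕ} (θ₀ : Params d N) {m : ℕ} (c : Fin m → ℝ)
    (v : Fin m → E (d + 1)) (hv : ∀ j, ‖v j‖ = 1)
    (h : ∀ x : E d, ‖x‖ ≤ 1 → networkFn θ₀ x = ∑ j, c j * relu (aff x (v j))) :
    ∃ θ : Params d N, (∀ x : E d, ‖x‖ ≤ 1 → networkFn θ x = networkFn θ₀ x) ∧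
      pathNorm θ ≤ 3 * ∑ j, |c j| := by
  obtain ⟨b, u, hu, hb, hbu, -⟩ := exists_unit_rep θ₀.1 θ₀.2
  obtain ⟨c', v', hv', hc', hcv, hc'c⟩ := exists_unit_rep c v
  obtain ⟨hκ, hA⟩ := kinkCoeff_eq_and_affPart_eq hu hv' hb hc' fun x hx =>
    (hbu x hx).symm.trans ((h x hx).trans (hcv x hx))
  have hB : KinkBounded (kinkCoeff b u) (affPart b u) (∑ j, |c j|) := by
    rw [hκ, hA]
    exact (kinkBounded_of_norm_eq_one hv').mono (by simpa [hv] using hc'c)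
  by_cases hN : (kinkSupport b u).card + 2 ≤ N
  · obtain ⟨θ, hθ, hθn⟩ := exists_params_of_card_kinkSupport_add_two_le hu hb hB hN
    exact ⟨θ, fun x hx => (hθ x hx).trans (hbu x hx).symm, hθn⟩
  · obtain ⟨b', hb'u, hb'⟩ := exists_sum_abs_le_three_mul hu hb hB (by rw [Fintype.card_fin]; omega)
    refine ⟨(b', u), fun x hx => (hb'u x hx).trans (hbu x hx).symm, ?_⟩
    simpa [pathNorm, hu] using hb'

theorem statement0_general (d N : ℕ) (f : E d → ℝ)
    (hf : f ∈ NNclass d N) :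
    kappaF f ≤
      sInf {s | ∃ θ : Params d N, (∀ x : E d, ‖x‖ ≤ 1 → f x = networkFn θ x) ∧ s = pathNorm θ} ∧
    sInf {s | ∃ θ : Params d N, (∀ x : E d, ‖x‖ ≤ 1 → f x = networkFn θ x) ∧ s = pathNorm θ} ≤
      3 * kappaF f := by
  obtain ⟨θ₀, hθ₀⟩ := hf
  set A := {s | ∃ θ : Params d N, (∀ x : E d, ‖x‖ ≤ 1 → f x = networkFn θ x) ∧ s = pathNorm θ}
  have hA : A.Nonempty := ⟨_, θ₀, hθ₀, rfl⟩
  refine ⟨le_csInf hA fun _ ⟨θ, hθ, hs⟩ => hs ▸ kappaF_le_pathNorm θ hθ, ?_⟩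
  have hAbdd : BddBelow A :=
    ⟨0, fun _ ⟨θ, _, hs⟩ => hs ▸ Finset.sum_nonneg fun _ _ => by positivity⟩
  obtain ⟨c, v, hv, -, hcv, -⟩ := exists_unit_rep θ₀.1 θ₀.2
  have hthird : sInf A / 3 ≤ kappaF f := by
    refine le_csInf ⟨_, N, c, v, hv, fun x hx => (hθ₀ x hx).trans (hcv x hx), rfl⟩ ?_
    rintro _ ⟨m, c, v, hv, hrep, rfl⟩
    obtain ⟨θ, hθ, hθn⟩ := exists_params_pathNorm_le_three_mul θ₀ c v hv fun x hx =>
      (hθ₀ x hx).symm.trans (hrep x hx)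
    have := csInf_le hAbdd ⟨θ, fun x hx => (hθ₀ x hx).trans (hθ x hx).symm, rfl⟩
    linarith
  linarith

/-- For f ∈ NN(N), κ(f) ≤ inf{κ(θ) : f_θ = f on B^d} ≤ 3κ(f). -/
theorem statement0 (d N : ℕ) (hd : 1 ≤ d) (hN : 1 ≤ N) (f : E d → ℝ)
    (hf : f ∈ NNclass d N) :
    kappaF f ≤
      sInf {s | ∃ θ : Params d N, (∀ x : E d, ‖x‖ ≤ 1 → f x = networkFn θ x) ∧ s = pathNorm θ} ∧
    sInf {s | ∃ θ : Params d N, (∀ x : E d, ‖x‖ ≤ 1 → f x = networkFn θ x) ∧ s = pathNorm θ} ≤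
      3 * kappaF f :=
  statement0_general d N f hf
end
end

section
/- Let f : B^d → ℝ be given by f(x) = Σ_{k=1}^K c_k σ((xᵀ,1)v_k) + (xᵀ,1)w for all x ∈ B^d, where K ≥ 0, c_k ∈ ℝ, w ∈ ℝ^{d+1}, and v_1,…,v_K ∈ S_0 satisfy v_i ≠ v_k and v_i ≠ -v_k for all 1 ≤ i ≠ k ≤ K. Then max{ ‖w‖₂, Σ_{k=1}^K |c_k| } ≤ κ(f) ≤ 2‖w‖₂ + Σ_{k=1}^K |c_k|. -/
open MeasureTheory Real

noncomputable section

/-!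
Write `aff x v = ⟪x, spatial v⟫ + v_{d+1}`. On the unit ball a neuron `σ(aff x v)` with `v ∈ S_+`
is the affine function `aff x v`, one with `v ∈ S_-` vanishes, and for `v ∈ S_0` the kink
hyperplane `{aff x v = 0}` meets the open ball, since `|v_{d+1}| < ‖spatial v‖`.

Upper bound: `aff x w = ‖w‖ σ(aff x u) - ‖w‖ σ(-aff x u)` for a unit `u` with `‖w‖ u = w`.

Lower bound: given any representation `f = ∑ c'_j σ(aff · v'_j)`, absorb the neurons with
`v'_j ∈ S_±` into the affine part. For `u ∈ S_0` pick a point on the kink hyperplane of `u`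
lying on no other kink; the second difference along `spatial u` there sees only the neurons with
direction `±u`, and it vanishes for affine functions. Hence the coefficients of each class `±u`
agree in the two representations, so `c_k = ∑_{v'_j = ±v_k} c'_j` and `∑ |c_k| ≤ ∑ |c'_j|`.
With `σ(t) = (t + |t|) / 2` the same cancellation, applied class by class, kills the `|·|`-parts,
so the affine parts agree: `2 (w - ∑_{v'_j ∈ S_+} c'_j v'_j) = ∑_{v'_j ∈ S_0} c'_j v'_j - ∑ c_k v_k`,
which bounds `‖w‖` by `∑ |c'_j|`.
-/

namespace RidgeRelu

open Finset Filter Topology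
open scoped RealInnerProductSpace

variable {d : ℕ}

def spatial : E (d + 1) →ₗ[ℝ] E d where
  toFun v := WithLp.toLp 2 fun i => v i.castSucc
  map_add' _ _ := rfl
  map_smul' _ _ := rfl

@[simp]
lemma spatial_apply (v : E (d + 1)) (i : Fin d) : spatial v i = v i.castSucc := rfl

lemma aff_eq_inner (x : E d) (v : E (d + 1)) :
    aff x v = ⟪x, spatial v⟫ + v (Fin.last d) := by
  simp [aff, PiLp.inner_apply, mul_comm]

lemma norm_sq_eq_norm_spatial_sq_add (v : E (d + 1)) :
    ‖v‖ ^ 2 = ‖spatial v‖ ^ 2 + v (Fin.last d) ^ 2 := by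
  simp [EuclideanSpace.norm_sq_eq, Fin.sum_univ_castSucc]

def affL (x : E d) : E (d + 1) →ₗ[ℝ] ℝ :=
  (innerₛₗ ℝ x).comp spatial + (EuclideanSpace.proj (Fin.last d) : E (d + 1) →L[ℝ] ℝ).toLinearMap

lemma affL_apply (x : E d) (v : E (d + 1)) : affL x v = aff x v := by
  simp [affL, aff_eq_inner]

lemma aff_add_smul_left (x z : E d) (t : ℝ) (v : E (d + 1)) :
    aff (x + t • z) v = aff x v + t * ⟪z, spatial v⟫ := by
  simp only [aff_eq_inner, inner_add_left, real_inner_smul_left]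
  ring

lemma aff_sub_smul_left (x z : E d) (t : ℝ) (v : E (d + 1)) :
    aff (x - t • z) v = aff x v - t * ⟪z, spatial v⟫ := by
  rw [sub_eq_add_neg, ← neg_smul, aff_add_smul_left]
  ring

@[fun_prop]
lemma continuous_aff_left (v : E (d + 1)) : Continuous fun x : E d => aff x v := by
  simp only [aff_eq_inner]
  fun_prop

@[simp] lemma aff_zero_right (x : E d) : aff x 0 = 0 := by
  rw [← affL_apply, map_zero]

@[simp] lemma aff_neg (x : E d) (v : E (d + 1)) : aff x (-v) = -aff x v := by
  rw [← affL_apply, map_neg, affL_apply]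

lemma aff_sub (x : E d) (v w : E (d + 1)) : aff x (v - w) = aff x v - aff x w := by
  rw [← affL_apply, map_sub, affL_apply, affL_apply]

lemma aff_smul (x : E d) (t : ℝ) (v : E (d + 1)) : aff x (t • v) = t * aff x v := by
  rw [← affL_apply, map_smul, affL_apply, smul_eq_mul]

lemma aff_sum {ι : Type*} (x : E d) (s : Finset ι) (V : ι → E (d + 1)) :
    aff x (∑ j ∈ s, V j) = ∑ j ∈ s, aff x (V j) := by
  simp only [← affL_apply, map_sum]

@[simp] lemma aff_zero_left (v : E (d + 1)) : aff (0 : E d) v = v (Fin.last d) := by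
  simp [aff_eq_inner]

lemma eq_zero_of_spatial_eq_zero {v : E (d + 1)} (hsp : spatial v = 0)
    (hlast : v (Fin.last d) = 0) : v = 0 := by
  have := norm_sq_eq_norm_spatial_sq_add v
  rw [hsp, hlast] at this
  simpa using this

lemma eq_zero_of_forall_aff_eq_zero {w : E (d + 1)} (h : ∀ x : E d, ‖x‖ ≤ 1 → aff x w = 0) :
    w = 0 := by
  have hlast : w (Fin.last d) = 0 := by simpa using h 0 (by simp)
  refine eq_zero_of_spatial_eq_zero ?_ hlast
  set a := spatial w
  have hx : ‖(1 + ‖a‖)⁻¹ • a‖ ≤ 1 := by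
    rw [norm_smul, norm_inv, Real.norm_of_nonneg (by positivity), inv_mul_le_iff₀ (by positivity)]
    linarith
  have := h _ hx
  rw [aff_eq_inner, hlast, add_zero, real_inner_smul_left, real_inner_self_eq_norm_sq] at this
  simpa [show (1 + ‖a‖)⁻¹ ≠ 0 by positivity] using this

lemma sqrt_two_div_two_sq : (√2 / 2) ^ 2 = 1 / 2 := by
  rw [div_pow, Real.sq_sqrt zero_le_two]
  norm_num

lemma mem_Szero_iff {v : E (d + 1)} :
    v ∈ Szero d ↔ ‖v‖ = 1 ∧ |v (Fin.last d)| < √2 / 2 := by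
  simp only [Szero, Sminus, Splus, Set.mem_sdiff, Set.mem_union, Set.mem_ofPred_eq, norm_neg,
    PiLp.neg_apply, abs_lt]
  constructor
  · rintro ⟨h1, h2⟩
    refine ⟨h1, ?_, ?_⟩ <;> by_contra! h
    · exact h2 (.inl ⟨h1, h⟩)
    · exact h2 (.inr ⟨h1, by linarith⟩)
  · rintro ⟨h1, h2, h3⟩
    exact ⟨h1, by rintro (⟨-, h⟩ | ⟨-, h⟩) <;> linarith⟩

lemma aff_nonneg_of_mem_Splus {v : E (d + 1)} (hv : v ∈ Splus d) {x : E d} (hx : ‖x‖ ≤ 1) :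
    0 ≤ aff x v := by
  obtain ⟨hnorm, hlast⟩ : ‖v‖ = 1 ∧ √2 / 2 ≤ v (Fin.last d) := by
    simpa [Splus, Sminus] using hv
  have hsq := sqrt_two_div_two_sq
  have hsplit := norm_sq_eq_norm_spatial_sq_add v
  rw [hnorm] at hsplit
  have hpos : 0 ≤ √2 / 2 := by positivity
  have hsp : ‖spatial v‖ ≤ v (Fin.last d) := by nlinarith [norm_nonneg (spatial v)]
  have hinner := abs_real_inner_le_norm x (spatial v)
  rw [aff_eq_inner]
  nlinarith [neg_abs_le ⟪x, spatial v⟫, norm_nonneg (spatial v)]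

lemma aff_nonpos_of_mem_Sminus {v : E (d + 1)} (hv : v ∈ Sminus d) {x : E d} (hx : ‖x‖ ≤ 1) :
    aff x v ≤ 0 := by
  have := aff_nonneg_of_mem_Splus (v := -v) (by simpa [Splus]) hx
  rwa [aff_neg, neg_nonneg] at this

lemma dense_setOf_aff_ne_zero {w : E (d + 1)} (hw : w ≠ 0) : Dense {x : E d | aff x w ≠ 0} := by
  intro x
  rcases ne_or_eq (aff x w) 0 with hx | hx
  · exact subset_closure hx
  have ha : spatial w ≠ 0 := fun ha =>
    hw (eq_zero_of_spatial_eq_zero ha (by simpa [aff_eq_inner, ha] using hx))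
  have hlim : Tendsto (fun t : ℝ => x + t • spatial w) (𝓝[≠] 0) (𝓝 x) := by
    have : Continuous fun t : ℝ => x + t • spatial w := by fun_prop
    simpa using (this.tendsto 0).mono_left nhdsWithin_le_nhds
  refine mem_closure_of_tendsto hlim (eventually_nhdsWithin_of_forall fun t ht => ?_)
  simp only [Set.mem_ofPred_eq, aff_add_smul_left, hx, zero_add]
  exact mul_ne_zero ht (inner_self_ne_zero.2 ha)

lemma sq_last_lt_half_of_mem_Szero {u : E (d + 1)} (hu : u ∈ Szero d) :
    u (Fin.last d) ^ 2 < 1 / 2 := by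
  have h := (mem_Szero_iff.1 hu).2
  rw [← sqrt_two_div_two_sq, ← sq_abs]
  exact pow_lt_pow_left₀ h (abs_nonneg _) two_ne_zero

lemma half_lt_norm_spatial_sq_of_mem_Szero {u : E (d + 1)} (hu : u ∈ Szero d) :
    1 / 2 < ‖spatial u‖ ^ 2 := by
  have := norm_sq_eq_norm_spatial_sq_add u
  rw [(mem_Szero_iff.1 hu).1] at this
  linarith [sq_last_lt_half_of_mem_Szero hu]

lemma sub_smul_ne_zero_of_ne {F : Type*} [NormedAddCommGroup F] [NormedSpace ℝ F] {u v : F}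
    (hu : ‖u‖ = 1) (hv : ‖v‖ = 1) (h₁ : v ≠ u) (h₂ : v ≠ -u) (μ : ℝ) : v - μ • u ≠ 0 := by
  intro h
  rw [sub_eq_zero] at h
  have habs : |μ| = 1 := by rwa [h, norm_smul, hu, mul_one, Real.norm_eq_abs] at hv
  rcases abs_eq zero_le_one |>.1 habs with rfl | rfl
  · exact h₁ (by rw [h, one_smul])
  · exact h₂ (by rw [h, neg_one_smul])

/-- The projection of `E d` onto the hyperplane `{x | aff x u = 0}` along `spatial u`. -/
def kinkProj (u : E (d + 1)) (y : E d) : E d :=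
  y - (aff y u / ‖spatial u‖ ^ 2) • spatial u

lemma aff_kinkProj (u v : E (d + 1)) (y : E d) :
    aff (kinkProj u y) v = aff y (v - (⟪spatial u, spatial v⟫ / ‖spatial u‖ ^ 2) • u) := by
  rw [kinkProj, aff_sub_smul_left, aff_sub, aff_smul]
  ring

lemma aff_kinkProj_self {u : E (d + 1)} (hu : u ∈ Szero d) (y : E d) :
    aff (kinkProj u y) u = 0 := by
  have := half_lt_norm_spatial_sq_of_mem_Szero hu
  rw [aff_kinkProj, real_inner_self_eq_norm_sq, div_self (by positivity), one_smul, sub_self,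
    aff_zero_right]

lemma continuous_kinkProj (u : E (d + 1)) : Continuous (kinkProj (d := d) u) := by
  unfold kinkProj
  fun_prop

lemma norm_kinkProj_zero_lt_one {u : E (d + 1)} (hu : u ∈ Szero d) :
    ‖kinkProj u (0 : E d)‖ < 1 := by
  have hb := sq_last_lt_half_of_mem_Szero hu
  have ha := half_lt_norm_spatial_sq_of_mem_Szero hu
  have hsq : ‖kinkProj u (0 : E d)‖ ^ 2 < 1 := by
    rw [kinkProj, zero_sub, norm_neg, norm_smul, mul_pow, Real.norm_eq_abs, sq_abs, aff_zero_left,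
      div_pow, sq (‖spatial u‖ ^ 2), div_mul_eq_div_div, div_mul_cancel₀ _ (by positivity),
      div_lt_one (by positivity)]
    linarith
  nlinarith [norm_nonneg (kinkProj u (0 : E d))]

lemma exists_aff_eq_zero_and_ne_zero {ι : Type*} {u : E (d + 1)} (hu : u ∈ Szero d)
    (s : Finset ι) (V : ι → E (d + 1)) (hV : ∀ j ∈ s, ‖V j‖ = 1) :
    ∃ x : E d, ‖x‖ < 1 ∧ aff x u = 0 ∧ ∀ j ∈ s, V j ≠ u → V j ≠ -u → aff x (V j) ≠ 0 := by
  set t := s.filter fun j => V j ≠ u ∧ V j ≠ -u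
  have hdense : Dense (⋂ j ∈ (t : Set ι), {y : E d | aff (kinkProj u y) (V j) ≠ 0}) := by
    refine dense_biInter_of_isOpen (fun j _ => ?_) t.countable_toSet (fun j hj => ?_)
    · exact isOpen_ne_fun ((continuous_aff_left _).comp (continuous_kinkProj u)) continuous_const
    · simp only [t, coe_filter, Set.mem_ofPred_eq] at hj
      simp only [aff_kinkProj]
      exact dense_setOf_aff_ne_zero
        (sub_smul_ne_zero_of_ne (mem_Szero_iff.1 hu).1 (hV j hj.1) hj.2.1 hj.2.2 _)
  have h0 : (0 : E d) ∈ kinkProj u ⁻¹' Metric.ball 0 1 :=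
    mem_ball_zero_iff.2 (norm_kinkProj_zero_lt_one hu)
  obtain ⟨y, hy, hyu⟩ :=
    hdense.exists_mem_open (Metric.isOpen_ball.preimage (continuous_kinkProj u)) ⟨0, h0⟩
  exact ⟨kinkProj u y, mem_ball_zero_iff.1 hyu, aff_kinkProj_self hu y, fun j hj h₁ h₂ =>
    Set.mem_iInter₂.1 hy j (mem_coe.2 (mem_filter.2 ⟨hj, h₁, h₂⟩))⟩

lemma abs_add_add_abs_sub_of_abs_le {b h : ℝ} (hh : |h| ≤ |b|) : |b + h| + |b - h| = 2 * |b| := by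
  rcases le_total 0 b with hb | hb
  · rw [abs_of_nonneg hb] at hh ⊢
    rw [abs_of_nonneg (by linarith [neg_abs_le h]), abs_of_nonneg (by linarith [le_abs_self h])]
    ring
  · rw [abs_of_nonpos hb] at hh ⊢
    rw [abs_of_nonpos (by linarith [le_abs_self h]), abs_of_nonpos (by linarith [neg_abs_le h])]
    ring

lemma exists_step_crossing_only_kink {ι : Type*} {u : E (d + 1)} (hu : u ∈ Szero d)
    (s : Finset ι) (V : ι → E (d + 1)) (hV : ∀ j ∈ s, ‖V j‖ = 1) :
    ∃ x : E d, ∃ t > 0, ‖x‖ ≤ 1 ∧ aff x u = 0 ∧ ‖x + t • spatial u‖ ≤ 1 ∧ ‖x - t • spatial u‖ ≤ 1 ∧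
      ∀ j ∈ s, V j ≠ u → V j ≠ -u → |t * ⟪spatial u, spatial (V j)⟫| ≤ |aff x (V j)| := by
  obtain ⟨x, hx, hxu, hgen⟩ := exists_aff_eq_zero_and_ne_zero hu s V hV
  have hball : ∀ σ : ℝ, ∀ᶠ τ in 𝓝 (0 : ℝ), ‖x + (σ * τ) • spatial u‖ ≤ 1 := by
    intro σ
    have hc : Continuous fun τ : ℝ => ‖x + (σ * τ) • spatial u‖ := by fun_prop
    exact (hc.continuousAt.eventually_lt continuousAt_const (by simpa using hx)).mono
      fun _ => le_of_lt
  have hsmall : ∀ᶠ τ in 𝓝 (0 : ℝ), ∀ j ∈ s, V j ≠ u → V j ≠ -u →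
      |τ * ⟪spatial u, spatial (V j)⟫| ≤ |aff x (V j)| := by
    refine (eventually_all_finset s).2 fun j hj => ?_
    by_cases hj' : V j ≠ u ∧ V j ≠ -u
    · have hc : Continuous fun τ : ℝ => |τ * ⟪spatial u, spatial (V j)⟫| := by fun_prop
      exact (hc.continuousAt.eventually_lt continuousAt_const
        (by simpa using hgen j hj hj'.1 hj'.2)).mono fun _ h _ _ => h.le
    · exact Eventually.of_forall fun _ h₁ h₂ => absurd ⟨h₁, h₂⟩ hj'
  obtain ⟨t, ⟨⟨hplus, hminus⟩, ht⟩, ht0⟩ := ((((hball 1).and (hball (-1))).and hsmall).filter_mono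
    nhdsWithin_le_nhds |>.and (self_mem_nhdsWithin (s := Set.Ioi 0))).exists
  refine ⟨x, t, ht0, hx.le, hxu, by simpa using hplus, ?_, ht⟩
  simpa [sub_eq_add_neg] using hminus

lemma sum_filter_eq_zero_of_sum_abs_aff_eq {ι : Type*} {s : Finset ι} {C : ι → ℝ}
    {V : ι → E (d + 1)} {W u : E (d + 1)} (hV : ∀ j ∈ s, ‖V j‖ = 1) (hu : u ∈ Szero d)
    (h : ∀ x : E d, ‖x‖ ≤ 1 → ∑ j ∈ s, C j * |aff x (V j)| = aff x W) :
    ∑ j ∈ s with V j = u ∨ V j = -u, C j = 0 := by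
  obtain ⟨x, t, ht0, hx, hxu, hplus, hminus, ht⟩ := exists_step_crossing_only_kink hu s V hV
  have hterm : ∀ j ∈ s, |aff (x + t • spatial u) (V j)| + |aff (x - t • spatial u) (V j)|
      - 2 * |aff x (V j)| = if V j = u ∨ V j = -u then 2 * (t * ‖spatial u‖ ^ 2) else 0 := by
    intro j hj
    rw [aff_add_smul_left, aff_sub_smul_left]
    split_ifs with hju
    · have hα : |⟪spatial u, spatial (V j)⟫| = ‖spatial u‖ ^ 2 := by
        rcases hju with hju | hju <;> simp [hju]
      have hβ : aff x (V j) = 0 := by rcases hju with hju | hju <;> simp [hju, hxu]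
      rw [hβ, zero_add, zero_sub, abs_neg, abs_zero, abs_mul, hα, abs_of_pos ht0]
      ring
    · rw [not_or] at hju
      rw [abs_add_add_abs_sub_of_abs_le (ht j hj hju.1 hju.2), sub_self]
  -- the affine right-hand side has vanishing second differences
  have hsecond : ∑ j ∈ s, C j * (|aff (x + t • spatial u) (V j)| + |aff (x - t • spatial u) (V j)|
      - 2 * |aff x (V j)|) = 0 := by
    simp only [mul_sub, mul_add, mul_left_comm (C _) 2, sum_sub_distrib, sum_add_distrib,
      ← mul_sum]
    rw [h _ hplus, h _ hminus, h _ hx, aff_add_smul_left, aff_sub_smul_left]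
    ring
  rw [sum_congr rfl fun j hj => by rw [hterm j hj, mul_ite, mul_zero], ← sum_filter,
    ← sum_mul] at hsecond
  have := half_lt_norm_spatial_sq_of_mem_Szero hu
  exact (mul_eq_zero.1 hsecond).resolve_right (by positivity)

lemma eq_zero_of_sum_abs_aff_eq {ι : Type*} {s : Finset ι} {C : ι → ℝ} {V : ι → E (d + 1)}
    {W : E (d + 1)} (hV : ∀ j ∈ s, V j ∈ Szero d)
    (h : ∀ x : E d, ‖x‖ ≤ 1 → ∑ j ∈ s, C j * |aff x (V j)| = aff x W) : W = 0 := by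
  induction s using Finset.strongInduction with
  | H s ih =>
    rcases s.eq_empty_or_nonempty with rfl | ⟨j₀, hj₀⟩
    · exact eq_zero_of_forall_aff_eq_zero fun x hx => by simpa using (h x hx).symm
    set p : ι → Prop := fun j => V j = V j₀ ∨ V j = -V j₀
    have hzero := sum_filter_eq_zero_of_sum_abs_aff_eq (fun j hj => (mem_Szero_iff.1 (hV j hj)).1)
      (hV j₀ hj₀) h
    have hclass : ∀ x : E d, ∑ j ∈ s with p j, C j * |aff x (V j)| = 0 := by
      intro x
      have hterm : ∀ j ∈ s.filter p, C j * |aff x (V j)| = C j * |aff x (V j₀)| := by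
        intro j hj
        rcases (mem_filter.1 hj).2 with hj | hj <;> simp [hj]
      rw [sum_congr rfl hterm, ← sum_mul, hzero, zero_mul]
    refine ih (s.filter fun j => ¬p j) (filter_ssubset.2 ⟨j₀, hj₀, not_not.2 (Or.inl rfl)⟩)
      (fun j hj => hV j (mem_filter.1 hj).1) fun x hx => ?_
    rw [← h x hx, ← sum_filter_add_sum_filter_not s p, hclass, zero_add]

lemma abs_eq_two_mul_relu_sub (t : ℝ) : |t| = 2 * relu t - t := by
  rw [relu, ← max_zero_add_max_neg_zero_eq_abs_self]
  linarith [max_zero_sub_max_neg_zero_eq_self t]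

lemma sum_mul_abs_aff {ι : Type*} (s : Finset ι) (C : ι → ℝ) (V : ι → E (d + 1)) (x : E d) :
    ∑ j ∈ s, C j * |aff x (V j)| =
      2 * ∑ j ∈ s, C j * relu (aff x (V j)) - aff x (∑ j ∈ s, C j • V j) := by
  simp only [abs_eq_two_mul_relu_sub, aff_sum, aff_smul, mul_sub, sum_sub_distrib, mul_sum]
  ring_nf

lemma sum_abs_aff_disjSum_eq {ι κ : Type*} {s : Finset ι} {t : Finset κ} {C : ι → ℝ}
    {V : ι → E (d + 1)} {D : κ → ℝ} {U : κ → E (d + 1)} {W : E (d + 1)} {x : E d}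
    (h : ∑ i ∈ s, C i * relu (aff x (V i)) = ∑ k ∈ t, D k * relu (aff x (U k)) + aff x W) :
    ∑ i ∈ s.disjSum t, Sum.elim C (-D) i * |aff x (Sum.elim V U i)| =
      aff x ((2 : ℝ) • W - (∑ i ∈ s, C i • V i - ∑ k ∈ t, D k • U k)) := by
  rw [sum_disjSum]
  simp only [Sum.elim_inl, Sum.elim_inr, Pi.neg_apply, neg_mul, sum_neg_distrib]
  rw [sum_mul_abs_aff, sum_mul_abs_aff, h, aff_sub, aff_sub, aff_smul]
  ring

lemma sum_filter_eq_sum_filter_of_sum_relu_aff_eq {ι κ : Type*} {s : Finset ι} {t : Finset κ}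
    {C : ι → ℝ} {V : ι → E (d + 1)} {D : κ → ℝ} {U : κ → E (d + 1)} {W u : E (d + 1)}
    (hV : ∀ i ∈ s, ‖V i‖ = 1) (hU : ∀ k ∈ t, ‖U k‖ = 1) (hu : u ∈ Szero d)
    (h : ∀ x : E d, ‖x‖ ≤ 1 →
      ∑ i ∈ s, C i * relu (aff x (V i)) = ∑ k ∈ t, D k * relu (aff x (U k)) + aff x W) :
    ∑ i ∈ s with V i = u ∨ V i = -u, C i = ∑ k ∈ t with U k = u ∨ U k = -u, D k := by
  have := sum_filter_eq_zero_of_sum_abs_aff_eq (by simpa using And.intro hV hU) hu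
    fun x hx => sum_abs_aff_disjSum_eq (h x hx)
  have hfilter : (s.disjSum t).filter (fun i => Sum.elim V U i = u ∨ Sum.elim V U i = -u) =
      (s.filter fun i => V i = u ∨ V i = -u).disjSum (t.filter fun k => U k = u ∨ U k = -u) := by
    ext (i | k) <;> simp
  rw [hfilter, sum_disjSum] at this
  simp only [Sum.elim_inl, Sum.elim_inr, Pi.neg_apply, sum_neg_distrib] at this
  linarith

lemma two_smul_eq_of_sum_relu_aff_eq {ι κ : Type*} {s : Finset ι} {t : Finset κ}
    {C : ι → ℝ} {V : ι → E (d + 1)} {D : κ → ℝ} {U : κ → E (d + 1)} {W : E (d + 1)}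
    (hV : ∀ i ∈ s, V i ∈ Szero d) (hU : ∀ k ∈ t, U k ∈ Szero d)
    (h : ∀ x : E d, ‖x‖ ≤ 1 →
      ∑ i ∈ s, C i * relu (aff x (V i)) = ∑ k ∈ t, D k * relu (aff x (U k)) + aff x W) :
    (2 : ℝ) • W = ∑ i ∈ s, C i • V i - ∑ k ∈ t, D k • U k :=
  sub_eq_zero.1 <| eq_zero_of_sum_abs_aff_eq (by simpa using And.intro hV hU)
    fun x hx => sum_abs_aff_disjSum_eq (h x hx)

lemma relu_aff_eq_ite_add_ite {v : E (d + 1)} (hv : ‖v‖ = 1) {x : E d} (hx : ‖x‖ ≤ 1)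
    [Decidable (v ∈ Szero d)] [Decidable (v ∈ Splus d)] :
    relu (aff x v) = (if v ∈ Szero d then relu (aff x v) else 0) +
      if v ∈ Splus d then aff x v else 0 := by
  by_cases h0 : v ∈ Szero d
  · have : v ∉ Splus d := fun h => h0.2 (.inr h)
    simp [h0, this]
  by_cases hp : v ∈ Splus d
  · simp [h0, hp, relu, aff_nonneg_of_mem_Splus hp hx]
  · have hm : v ∈ Sminus d := by
      simp only [Szero, Set.mem_sdiff, Set.mem_ofPred_eq, hv, true_and, not_not] at h0
      exact h0.resolve_right hp
    simp [h0, hp, relu, aff_nonpos_of_mem_Sminus hm hx]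

open scoped Classical in
lemma sum_relu_aff_eq_sum_filter_Szero_add {ι : Type*} {s : Finset ι} {C : ι → ℝ}
    {V : ι → E (d + 1)} (hV : ∀ i ∈ s, ‖V i‖ = 1) {x : E d} (hx : ‖x‖ ≤ 1) :
    ∑ i ∈ s, C i * relu (aff x (V i)) =
      ∑ i ∈ s with V i ∈ Szero d, C i * relu (aff x (V i)) +
        aff x (∑ i ∈ s with V i ∈ Splus d, C i • V i) := by
  rw [sum_congr rfl fun i hi => by rw [relu_aff_eq_ite_add_ite (hV i hi) hx], aff_sum]
  simp only [mul_add, sum_add_distrib, mul_ite, mul_zero, sum_filter, aff_smul]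

lemma norm_sum_smul_le_sum_abs {ι : Type*} (s : Finset ι) (C : ι → ℝ) {V : ι → E (d + 1)}
    (hV : ∀ i ∈ s, ‖V i‖ = 1) : ‖∑ i ∈ s, C i • V i‖ ≤ ∑ i ∈ s, |C i| :=
  (norm_sum_le _ _).trans_eq <| sum_congr rfl fun i hi => by rw [norm_smul, hV i hi, mul_one,
    Real.norm_eq_abs]

lemma sum_abs_sum_filter_le {ι κ : Type*} [Fintype κ] (s : Finset ι) (C : ι → ℝ)
    (P : κ → ι → Prop) [∀ k i, Decidable (P k i)]
    (hP : ∀ i ∈ s, ∀ k k', P k i → P k' i → k = k') :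
    ∑ k, |∑ i ∈ s with P k i, C i| ≤ ∑ i ∈ s, |C i| := by
  classical
  have hdisj : (Set.univ : Set κ).PairwiseDisjoint fun k => s.filter (P k) :=
    fun k _ k' _ hkk' => disjoint_filter.2 fun i hi hk hk' => hkk' (hP i hi k k' hk hk')
  calc ∑ k, |∑ i ∈ s with P k i, C i|
      ≤ ∑ k, ∑ i ∈ s with P k i, |C i| := sum_le_sum fun k _ => abs_sum_le_sum_abs _ _
    _ = ∑ i ∈ univ.biUnion (fun k => s.filter (P k)), |C i| := by
      rw [sum_biUnion (by simpa using hdisj)]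
    _ ≤ ∑ i ∈ s, |C i| := sum_le_sum_of_subset_of_nonneg (biUnion_subset.2 fun k _ =>
      filter_subset _ _) fun _ _ _ => abs_nonneg _

lemma sum_abs_le_of_sum_relu_aff_eq {ι κ : Type*} [Fintype κ] {s : Finset ι} {C : ι → ℝ}
    {V : ι → E (d + 1)} {c : κ → ℝ} {v : κ → E (d + 1)} {W : E (d + 1)}
    (hV : ∀ i ∈ s, ‖V i‖ = 1) (hv : ∀ k, v k ∈ Szero d)
    (hdist : ∀ i k, i ≠ k → v i ≠ v k ∧ v i ≠ -v k)
    (h : ∀ x : E d, ‖x‖ ≤ 1 →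
      ∑ i ∈ s, C i * relu (aff x (V i)) = ∑ k, c k * relu (aff x (v k)) + aff x W) :
    ∑ k, |c k| ≤ ∑ i ∈ s, |C i| := by
  have hc : ∀ k, c k = ∑ i ∈ s with V i = v k ∨ V i = -v k, C i := by
    intro k
    rw [sum_filter_eq_sum_filter_of_sum_relu_aff_eq hV (fun k _ => (mem_Szero_iff.1 (hv k)).1)
      (hv k) h, sum_eq_single_of_mem k (by simp) fun k' hk' hne => ?_]
    have := hdist k' k hne
    exact absurd (mem_filter.1 hk').2 (by tauto)
  calc ∑ k, |c k| = ∑ k, |∑ i ∈ s with V i = v k ∨ V i = -v k, C i| := by simp only [← hc]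
    _ ≤ ∑ i ∈ s, |C i| := sum_abs_sum_filter_le s C _ fun i _ k k' hk hk' => by
      by_contra hne
      obtain ⟨h₁, h₂⟩ := hdist k k' hne
      rcases hk with hk | hk <;> rcases hk' with hk' | hk' <;> rw [hk] at hk'
      · exact h₁ hk'
      · exact h₂ hk'
      · exact h₂ (neg_eq_iff_eq_neg.1 hk')
      · exact h₁ (neg_inj.1 hk')

lemma max_norm_sum_abs_le_of_sum_relu_aff_eq {ι κ : Type*} [Fintype ι] [Fintype κ] {C : ι → ℝ}
    {V : ι → E (d + 1)} {c : κ → ℝ} {v : κ → E (d + 1)} {w : E (d + 1)}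
    (hV : ∀ i, ‖V i‖ = 1) (hv : ∀ k, v k ∈ Szero d)
    (hdist : ∀ i k, i ≠ k → v i ≠ v k ∧ v i ≠ -v k)
    (h : ∀ x : E d, ‖x‖ ≤ 1 →
      ∑ i, C i * relu (aff x (V i)) = ∑ k, c k * relu (aff x (v k)) + aff x w) :
    max ‖w‖ (∑ k, |c k|) ≤ ∑ i, |C i| := by
  classical
  set Z := univ.filter fun i => V i ∈ Szero d
  set P := univ.filter fun i => V i ∈ Splus d
  set W₁ := ∑ i ∈ P, C i • V i
  have hZ : ∀ x : E d, ‖x‖ ≤ 1 →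
      ∑ i ∈ Z, C i * relu (aff x (V i)) = ∑ k, c k * relu (aff x (v k)) + aff x (w - W₁) := by
    intro x hx
    have := sum_relu_aff_eq_sum_filter_Szero_add (s := univ) (C := C) (fun i _ => hV i) hx
    rw [aff_sub]
    linarith [h x hx]
  have hc : ∑ k, |c k| ≤ ∑ i ∈ Z, |C i| :=
    sum_abs_le_of_sum_relu_aff_eq (fun i _ => hV i) hv hdist hZ
  have hw : 2 * ‖w - W₁‖ ≤ ∑ i ∈ Z, |C i| + ∑ k, |c k| := by
    rw [show 2 * ‖w - W₁‖ = ‖(2 : ℝ) • (w - W₁)‖ by rw [norm_smul]; norm_num,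
      two_smul_eq_of_sum_relu_aff_eq (fun i hi => (mem_filter.1 hi).2) (fun k _ => hv k) hZ]
    exact (norm_sub_le _ _).trans (add_le_add (norm_sum_smul_le_sum_abs _ _ fun i _ => hV i)
      (norm_sum_smul_le_sum_abs _ _ fun k _ => (mem_Szero_iff.1 (hv k)).1))
  have hW₁ : ‖W₁‖ ≤ ∑ i ∈ P, |C i| := norm_sum_smul_le_sum_abs _ _ fun i _ => hV i
  have hZP : ∑ i ∈ Z, |C i| + ∑ i ∈ P, |C i| ≤ ∑ i, |C i| := by
    rw [← sum_union (disjoint_filter.2 fun i _ hZ hP => hZ.2 (.inr hP))]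
    exact sum_le_sum_of_subset_of_nonneg (subset_univ _) fun _ _ _ => abs_nonneg _
  have hP : 0 ≤ ∑ i ∈ P, |C i| := sum_nonneg fun _ _ => abs_nonneg _
  refine max_le ?_ (by linarith)
  linarith [norm_le_norm_add_norm_sub' w W₁]

lemma kappaF_le {f : E d → ℝ} {m : ℕ} {c : Fin m → ℝ} {v : Fin m → E (d + 1)}
    (hv : ∀ j, ‖v j‖ = 1) (hf : ∀ x : E d, ‖x‖ ≤ 1 → f x = ∑ j, c j * relu (aff x (v j))) :
    kappaF f ≤ ∑ j, |c j| :=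
  csInf_le ⟨0, by rintro _ ⟨m, c, v, -, -, rfl⟩; positivity⟩ ⟨m, c, v, hv, hf, rfl⟩

lemma le_kappaF {f : E d → ℝ} {b : ℝ}
    (hne : ∃ (m : ℕ) (c : Fin m → ℝ) (v : Fin m → E (d + 1)), (∀ j, ‖v j‖ = 1) ∧
      ∀ x : E d, ‖x‖ ≤ 1 → f x = ∑ j, c j * relu (aff x (v j)))
    (h : ∀ (m : ℕ) (c : Fin m → ℝ) (v : Fin m → E (d + 1)), (∀ j, ‖v j‖ = 1) →
      (∀ x : E d, ‖x‖ ≤ 1 → f x = ∑ j, c j * relu (aff x (v j))) → b ≤ ∑ j, |c j|) :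
    b ≤ kappaF f := by
  obtain ⟨m, c, v, hv, hf⟩ := hne
  exact le_csInf ⟨_, m, c, v, hv, hf, rfl⟩ fun _ ⟨m, c, v, hv, hf, hs⟩ => hs ▸ h m c v hv hf

lemma exists_norm_eq_one_smul_eq (w : E (d + 1)) : ∃ u : E (d + 1), ‖u‖ = 1 ∧ ‖w‖ • u = w := by
  rcases eq_or_ne w 0 with rfl | hw
  · obtain ⟨u, hu⟩ := exists_norm_eq (E (d + 1)) zero_le_one
    exact ⟨u, hu, by simp⟩
  · exact ⟨‖w‖⁻¹ • w, norm_smul_inv_norm hw, smul_inv_smul₀ (norm_ne_zero_iff.2 hw) w⟩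

lemma exists_relu_repr_sum_abs_eq {K : ℕ} {f : E d → ℝ} {c : Fin K → ℝ} {v : Fin K → E (d + 1)}
    {w : E (d + 1)} (hv : ∀ k, ‖v k‖ = 1)
    (hf : ∀ x : E d, ‖x‖ ≤ 1 → f x = (∑ k, c k * relu (aff x (v k))) + aff x w) :
    ∃ (c' : Fin (K + 2) → ℝ) (v' : Fin (K + 2) → E (d + 1)), (∀ j, ‖v' j‖ = 1) ∧
      (∀ x : E d, ‖x‖ ≤ 1 → f x = ∑ j, c' j * relu (aff x (v' j))) ∧
      ∑ j, |c' j| = 2 * ‖w‖ + ∑ k, |c k| := by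
  obtain ⟨u, hu, hwu⟩ := exists_norm_eq_one_smul_eq w
  refine ⟨Fin.append c ![‖w‖, -‖w‖], Fin.append v ![u, -u], fun j => ?_, fun x hx => ?_, ?_⟩
  · refine Fin.addCases (fun k => ?_) (fun i => ?_) j
    · simp [hv]
    · fin_cases i <;> simp [hu]
  · have hw : aff x w = ‖w‖ * aff x u := by rw [← aff_smul, hwu]
    simp only [hf x hx, relu, hw, Fin.sum_univ_add, Fin.append_left, Fin.append_right,
      Fin.sum_univ_two, Matrix.cons_val_zero, Matrix.cons_val_one, aff_neg, neg_mul, add_right_inj]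
    linear_combination ‖w‖ * (max_zero_sub_max_neg_zero_eq_self (aff x u)).symm
  · simp only [Fin.sum_univ_add, Fin.append_left, Fin.append_right, Fin.sum_univ_two,
      Matrix.cons_val_zero, Matrix.cons_val_one, abs_norm, abs_neg]
    ring

end RidgeRelu

open RidgeRelu in
theorem statement2_general (d K : ℕ) (c : Fin K → ℝ) (v : Fin K → E (d + 1))
    (w : E (d + 1)) (hv : ∀ k, v k ∈ Szero d)
    (hdist : ∀ i k, i ≠ k → v i ≠ v k ∧ v i ≠ -v k)
    (f : E d → ℝ)
    (hf : ∀ x : E d, ‖x‖ ≤ 1 → f x = (∑ k, c k * relu (aff x (v k))) + aff x w) :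
    max ‖w‖ (∑ k, |c k|) ≤ kappaF f ∧ kappaF f ≤ 2 * ‖w‖ + ∑ k, |c k| := by
  obtain ⟨c', v', hv', hf', hsum⟩ :=
    exists_relu_repr_sum_abs_eq (fun k => (mem_Szero_iff.1 (hv k)).1) hf
  refine ⟨le_kappaF ⟨_, c', v', hv', hf'⟩ fun _ C V hV hfV => ?_, hsum ▸ kappaF_le hv' hf'⟩
  exact max_norm_sum_abs_le_of_sum_relu_aff_eq hV hv hdist fun x hx => by rw [← hfV x hx, hf x hx]

/-- for f in reduced form, max{‖w‖₂, Σ|c_k|} ≤ κ(f) ≤ 2‖w‖₂ + Σ|c_k|. -/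
theorem statement2 (d K : ℕ) (hd : 1 ≤ d) (c : Fin K → ℝ) (v : Fin K → E (d + 1))
    (w : E (d + 1)) (hv : ∀ k, v k ∈ Szero d)
    (hdist : ∀ i k, i ≠ k → v i ≠ v k ∧ v i ≠ -v k)
    (f : E d → ℝ)
    (hf : ∀ x : E d, ‖x‖ ≤ 1 → f x = (∑ k, c k * relu (aff x (v k))) + aff x w) :
    max ‖w‖ (∑ k, |c k|) ≤ kappaF f ∧ kappaF f ≤ 2 * ‖w‖ + ∑ k, |c k| :=
  statement2_general d K c v w hv hdist f hf
end
end
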